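/- arXiv:1609.02865 — 4 statements merged into one kernel-verified Lean document; each statement's English description precedes it below -/
import Mathlib

section
/- Let S be a polycyclic monoid endowed with a Hausdorff locally compact topology for which multiplication is separately continuous. Then S is either discrete or compact; more precisely, if the topology is not discrete, then it coincides with the topology of the one-point compactification of the discrete space S∖{0}, i.e., it equals τ = {U ⊆ S : if 0 ∈ U then S∖U is finite}. -/
/-- A polycyclic monoid: an inverse monoid `S` with a two-sided zero `0 ≠ 1`
(encoded via `MonoidWithZero`), with inversion `inv` (the unique inverse
in the sense of inverse semigroups), generated (as a semigroup) by a set `Λ`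
with `x * inv x = 1` for `x ∈ Λ` and `x * inv y = 0` for distinct `x, y ∈ Λ`. -/
structure IsPolycyclicMonoid (S : Type*) [MonoidWithZero S] (inv : S → S) (Λ : Set S) : Prop where
  inv_inverse : ∀ a : S, a * inv a * a = a ∧ inv a * a * inv a = inv a
  inv_unique : ∀ a b : S, a * b * a = a → b * a * b = b → b = inv a
  zero_ne_one : (0 : S) ≠ 1
  gen_unit : ∀ x ∈ Λ, x * inv x = 1
  gen_zero : ∀ x ∈ Λ, ∀ y ∈ Λ, x ≠ y → x * inv y = 0
  generates : Subsemigroup.closure (Λ ∪ inv '' Λ) = ⊤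

/-- The Green `R`-class of `u`: the set of `x` with `xS = uS`. -/
def greenR {S : Type*} [Mul S] (u : S) : Set S :=
  {x | {t | ∃ s, t = x * s} = {t | ∃ s, t = u * s}}

namespace PolyAux

variable {S : Type*} [MonoidWithZero S] {inv : S → S} {Λ : Set S}

/-- product of the reversed, inverted list -/
def ip (inv : S → S) (l : List S) : S := (l.reverse.map inv).prod

/-- `l` is a word over the alphabet `Λ` -/
def Wd (Λ : Set S) (l : List S) : Prop := ∀ a ∈ l, a ∈ Λ

theorem Wd.append {l m : List S} (hl : Wd Λ l) (hm : Wd Λ m) : Wd Λ (l ++ m) := by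
  intro a ha; rcases List.mem_append.1 ha with h | h
  · exact hl a h
  · exact hm a h

theorem Wd.of_append_left {l m : List S} (h : Wd Λ (l ++ m)) : Wd Λ l :=
  fun a ha => h a (List.mem_append.2 (Or.inl ha))

theorem Wd.of_append_right {l m : List S} (h : Wd Λ (l ++ m)) : Wd Λ m :=
  fun a ha => h a (List.mem_append.2 (Or.inr ha))

theorem wd_nil : Wd Λ ([] : List S) := fun a ha => absurd ha (List.not_mem_nil (a := a))

theorem wd_singleton {x : S} (hx : x ∈ Λ) : Wd Λ [x] := by
  intro a ha; rcases List.mem_singleton.1 ha with rfl; exact hx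

theorem wd_replicate {x : S} (hx : x ∈ Λ) (k : ℕ) : Wd Λ (List.replicate k x) := by
  intro a ha; rcases List.eq_of_mem_replicate ha with rfl; exact hx

@[simp] theorem ip_nil : ip inv ([] : List S) = 1 := by simp [ip]

@[simp] theorem ip_append (l m : List S) : ip inv (l ++ m) = ip inv m * ip inv l := by
  simp [ip, List.reverse_append]

theorem ip_concat (l : List S) (x : S) : ip inv (l ++ [x]) = inv x * ip inv l := by
  simp [ip, List.reverse_append]

theorem ip_singleton (x : S) : ip inv [x] = inv x := by simp [ip]

variable (hS : IsPolycyclicMonoid S inv Λ)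
include hS

theorem prod_ip {l : List S} (hl : Wd Λ l) : l.prod * ip inv l = 1 := by
  induction l with
  | nil => simp
  | cons x l ih =>
    have hx : x ∈ Λ := hl x (List.mem_cons_self (a := x) (l := l))
    have hl' : Wd Λ l := fun a ha => hl a (List.mem_cons_of_mem _ ha)
    have : ip inv (x :: l) = ip inv l * inv x := by
      simp [ip, List.reverse_cons]
    rw [List.prod_cons, this, mul_assoc, ← mul_assoc l.prod, ih hl', one_mul,
      hS.gen_unit x hx]

theorem inv_ne_zero {x : S} (hx : x ∈ Λ) : inv x ≠ 0 := by
  intro h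
  have := hS.gen_unit x hx
  rw [h, mul_zero] at this
  exact hS.zero_ne_one this

/-- no generator is left-invertible-by-its-inverse -/
theorem no_unit {x : S} (hx : x ∈ Λ) (h1 : inv x * x = 1) : False := by
  by_cases hy : ∃ y ∈ Λ, y ≠ x
  · obtain ⟨y, hyΛ, hyx⟩ := hy
    have h0 : y * inv x = 0 := hS.gen_zero y hyΛ x hx hyx
    have : y = 0 := by
      calc y = y * (inv x * x) := by rw [h1, mul_one]
      _ = y * inv x * x := by rw [mul_assoc]
      _ = 0 := by rw [h0, zero_mul]
    have h1' := hS.gen_unit y hyΛ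
    rw [this, zero_mul] at h1'
    exact hS.zero_ne_one h1'
  · push_neg at hy
    -- all of Λ equals {x}; every element of the closure is a unit
    have hunit : ∀ a ∈ Subsemigroup.closure (Λ ∪ inv '' Λ), IsUnit a := by
      intro a ha
      induction ha using Subsemigroup.closure_induction with
      | mem b hb =>
        rcases hb with hb | ⟨y, hyΛ, rfl⟩
        · have : b = x := hy b hb
          subst this
          exact ⟨⟨b, inv b, hS.gen_unit b hb, h1⟩, rfl⟩
        · have : y = x := hy y hyΛ
          subst this
          exact ⟨⟨inv y, y, h1, hS.gen_unit y hyΛ⟩, rfl⟩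
      | mul b c _ _ hb hc => exact hb.mul hc
    have h0 : (0 : S) ∈ Subsemigroup.closure (Λ ∪ inv '' Λ) := by
      rw [hS.generates]; trivial
    have := hunit 0 h0
    rw [isUnit_zero_iff] at this
    exact hS.zero_ne_one this

theorem left_eq_of_one {a l : S} (hl : l * a = 1) (hr' : a * inv a = 1) : l = inv a := by
  calc l = l * (a * inv a) := by rw [hr', mul_one]
  _ = l * a * inv a := by rw [mul_assoc]
  _ = inv a := by rw [hl, one_mul]

/-- a pure word with product 1 is empty -/
theorem prod_eq_one {l : List S} (hl : Wd Λ l) : l.prod = 1 → l = [] := by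
  induction l using List.reverseRecOn with
  | nil => intro _; rfl
  | append_singleton l x _ =>
    intro h
    rw [List.prod_append, List.prod_cons, List.prod_nil, mul_one] at h
    have hx : x ∈ Λ := hl.of_append_right x (List.mem_singleton.2 rfl)
    have := left_eq_of_one hS h (hS.gen_unit x hx)
    exfalso
    exact no_unit hS hx (by rw [← this, h])

/-- an inverted word with product 1 is empty -/
theorem ip_eq_one {l : List S} (hl : Wd Λ l) : ip inv l = 1 → l = [] := by
  induction l using List.reverseRecOn with
  | nil => intro _; rfl
  | append_singleton l x _ =>
    intro h
    rw [ip_concat] at h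
    have hx : x ∈ Λ := hl.of_append_right x (List.mem_singleton.2 rfl)
    have hz : ip inv l = x := by
      calc ip inv l = (x * inv x) * ip inv l := by rw [hS.gen_unit x hx, one_mul]
      _ = x * (inv x * ip inv l) := by rw [mul_assoc]
      _ = x := by rw [h, mul_one]
    rw [hz] at h
    exact (no_unit hS hx h).elim

/-- `ip l * l.prod = 1` forces `l = []`. -/
theorem ip_prod_eq_one {l : List S} (hl : Wd Λ l) : ip inv l * l.prod = 1 → l = [] := by
  induction l using List.reverseRecOn with
  | nil => intro _; rfl
  | append_singleton l x ih =>
    intro h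
    have hx : x ∈ Λ := hl.of_append_right x (List.mem_singleton.2 rfl)
    have hl' : Wd Λ l := hl.of_append_left
    rw [ip_concat, List.prod_append, List.prod_cons, List.prod_nil, mul_one] at h
    have h' : inv x * (ip inv l * l.prod) * x = 1 := by
      rw [← h]; simp [mul_assoc]
    have hm : ip inv l * l.prod = 1 := by
      calc ip inv l * l.prod
          = (x * inv x) * (ip inv l * l.prod) * (x * inv x) := by
            rw [hS.gen_unit x hx, one_mul, mul_one]
      _ = x * (inv x * (ip inv l * l.prod) * x) * inv x := by simp [mul_assoc]
      _ = 1 := by rw [h', mul_one, hS.gen_unit x hx]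
    have hln := ih hl' hm
    subst hln
    simp at h
    exact (no_unit hS hx h).elim

/-- reduction trichotomy: `u.prod * ip s` -/
theorem tri (s : List S) (hs : Wd Λ s) : ∀ (u : List S), Wd Λ u →
    (∃ w, Wd Λ w ∧ u = w ++ s ∧ u.prod * ip inv s = w.prod) ∨
    (∃ w, Wd Λ w ∧ s = w ++ u ∧ u.prod * ip inv s = ip inv w) ∨
    u.prod * ip inv s = 0 := by
  induction s using List.reverseRecOn with
  | nil =>
    intro u hu
    exact Or.inl ⟨u, hu, by simp⟩
  | append_singleton s x ih =>
    intro u hu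
    have hx : x ∈ Λ := hs.of_append_right x (List.mem_singleton.2 rfl)
    have hs' : Wd Λ s := hs.of_append_left
    rcases List.eq_nil_or_concat u with rfl | ⟨u', y, he⟩
    · refine Or.inr (Or.inl ⟨s ++ [x], hs, by simp⟩)
    · rw [List.concat_eq_append] at he
      subst he
      have hy : y ∈ Λ := hu.of_append_right y (List.mem_singleton.2 rfl)
      have hu' : Wd Λ u' := hu.of_append_left
      by_cases hxy : y = x
      · subst hxy
        have key : (u' ++ [y]).prod * ip inv (s ++ [y]) = u'.prod * ip inv s := by
          rw [ip_concat, List.prod_append, List.prod_cons, List.prod_nil, mul_one]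
          calc u'.prod * y * (inv y * ip inv s)
              = u'.prod * (y * inv y) * ip inv s := by simp [mul_assoc]
          _ = u'.prod * ip inv s := by rw [hS.gen_unit y hy, mul_one]
        rcases ih hs' u' hu' with ⟨w, hw, rfl, hval⟩ | ⟨w, hw, hseq, hval⟩ | hval
        · exact Or.inl ⟨w, hw, by simp, by rw [key, hval]⟩
        · exact Or.inr (Or.inl ⟨w, hw, by rw [hseq, List.append_assoc], by rw [key, hval]⟩)
        · exact Or.inr (Or.inr (by rw [key, hval]))
      · refine Or.inr (Or.inr ?_)
        rw [ip_concat, List.prod_append, List.prod_cons, List.prod_nil, mul_one]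
        calc u'.prod * y * (inv x * ip inv s)
            = u'.prod * (y * inv x) * ip inv s := by simp [mul_assoc]
        _ = 0 := by rw [hS.gen_zero y hy x hx hxy, mul_zero, zero_mul]

/-- `w.prod * ip w' = 1` forces `w = w'`  -/
theorem prod_ip_eq_one {w w' : List S} (hw : Wd Λ w) (hw' : Wd Λ w') :
    w.prod * ip inv w' = 1 → w = w' := by
  intro h
  rcases tri hS w' hw' w hw with ⟨v, hv, he, hval⟩ | ⟨v, hv, he, hval⟩ | hval
  · have : v = [] := prod_eq_one hS hv (by rw [← hval, h])
    subst this; simpa using he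
  · have : v = [] := ip_eq_one hS hv (by rw [← hval, h])
    subst this; simpa using he.symm
  · rw [hval] at h; exact (hS.zero_ne_one h).elim

theorem prod_inj {q t : List S} (hq : Wd Λ q) (ht : Wd Λ t) (h : q.prod = t.prod) : q = t := by
  have : q.prod * ip inv t = 1 := by rw [h]; exact prod_ip hS ht
  exact prod_ip_eq_one hS hq ht this

/-- `ip w * w'.prod = 1` forces both empty -/
theorem ip_prod_eq_one' {w w' : List S} (hw : Wd Λ w) (hw' : Wd Λ w') :
    ip inv w * w'.prod = 1 → w = [] ∧ w' = [] := by
  intro h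
  have h2 : w.prod * ip inv w' = 1 := by
    calc w.prod * ip inv w'
        = w.prod * (ip inv w * w'.prod) * ip inv w' := by rw [h, mul_one]
    _ = (w.prod * ip inv w) * (w'.prod * ip inv w') := by simp [mul_assoc]
    _ = 1 := by rw [prod_ip hS hw, prod_ip hS hw', one_mul]
  have hww : w = w' := prod_ip_eq_one hS hw hw' h2
  subst hww
  have : w = [] := ip_prod_eq_one hS hw h
  exact ⟨this, this⟩


theorem el_one_eq {p q : List S} (hp : Wd Λ p) (hq : Wd Λ q) :
    p.prod * (ip inv p * q.prod) * ip inv q = 1 := by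
  calc p.prod * (ip inv p * q.prod) * ip inv q
      = (p.prod * ip inv p) * (q.prod * ip inv q) := by simp [mul_assoc]
  _ = 1 := by rw [prod_ip hS hp, prod_ip hS hq, one_mul]

theorem el_ne_zero {p q : List S} (hp : Wd Λ p) (hq : Wd Λ q) :
    ip inv p * q.prod ≠ 0 := by
  intro h
  have := el_one_eq hS hp hq
  rw [h, mul_zero, zero_mul] at this
  exact hS.zero_ne_one this

theorem el_inj {p q s t : List S} (hp : Wd Λ p) (hq : Wd Λ q) (hs : Wd Λ s) (ht : Wd Λ t)
    (h : ip inv p * q.prod = ip inv s * t.prod) : p = s ∧ q = t := by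
  have h1 : q.prod = (p.prod * ip inv s) * t.prod := by
    calc q.prod = (p.prod * ip inv p) * q.prod := by rw [prod_ip hS hp, one_mul]
    _ = p.prod * (ip inv p * q.prod) := by rw [mul_assoc]
    _ = p.prod * (ip inv s * t.prod) := by rw [h]
    _ = (p.prod * ip inv s) * t.prod := by rw [mul_assoc]
  rcases tri hS s hs p hp with ⟨w, hw, hps, hval⟩ | ⟨w, hw, hsp, hval⟩ | hval
  · -- p = w ++ s
    rw [hval, ← List.prod_append] at h1
    have hqe : q = w ++ t := prod_inj hS hq (hw.append ht) h1
    have h2 : t.prod = ip inv w * q.prod := by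
      calc t.prod = (s.prod * ip inv s) * t.prod := by rw [prod_ip hS hs, one_mul]
      _ = s.prod * (ip inv s * t.prod) := by rw [mul_assoc]
      _ = s.prod * (ip inv p * q.prod) := by rw [h]
      _ = s.prod * (ip inv (w ++ s) * q.prod) := by rw [hps]
      _ = (s.prod * ip inv s) * (ip inv w * q.prod) := by rw [ip_append]; simp [mul_assoc]
      _ = ip inv w * q.prod := by rw [prod_ip hS hs, one_mul]
    have h3 : t.prod = (ip inv w * w.prod) * t.prod := by
      calc t.prod = ip inv w * q.prod := h2
      _ = ip inv w * (w ++ t).prod := by rw [hqe]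
      _ = (ip inv w * w.prod) * t.prod := by rw [List.prod_append, mul_assoc]
    have h4 : ip inv w * w.prod = 1 := by
      calc ip inv w * w.prod
          = (ip inv w * w.prod) * (t.prod * ip inv t) := by rw [prod_ip hS ht, mul_one]
      _ = ((ip inv w * w.prod) * t.prod) * ip inv t := by simp [mul_assoc]
      _ = t.prod * ip inv t := by rw [← h3]
      _ = 1 := prod_ip hS ht
    have hwnil : w = [] := ip_prod_eq_one hS hw h4
    subst hwnil
    simp only [List.nil_append] at hps hqe
    exact ⟨hps, hqe⟩
  · -- s = w ++ p
    rw [hval] at h1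
    have h2 : t.prod = (w ++ q).prod := by
      calc t.prod = (w.prod * ip inv w) * t.prod := by rw [prod_ip hS hw, one_mul]
      _ = w.prod * (ip inv w * t.prod) := by rw [mul_assoc]
      _ = w.prod * q.prod := by rw [← h1]
      _ = (w ++ q).prod := by rw [List.prod_append]
    have hte : t = w ++ q := prod_inj hS ht (hw.append hq) h2
    have h3 : q.prod = (ip inv w * w.prod) * q.prod := by
      calc q.prod = ip inv w * t.prod := h1
      _ = ip inv w * (w ++ q).prod := by rw [hte]
      _ = (ip inv w * w.prod) * q.prod := by rw [List.prod_append, mul_assoc]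
    have h4 : ip inv w * w.prod = 1 := by
      calc ip inv w * w.prod
          = (ip inv w * w.prod) * (q.prod * ip inv q) := by rw [prod_ip hS hq, mul_one]
      _ = ((ip inv w * w.prod) * q.prod) * ip inv q := by simp [mul_assoc]
      _ = q.prod * ip inv q := by rw [← h3]
      _ = 1 := prod_ip hS hq
    have hwnil : w = [] := ip_prod_eq_one hS hw h4
    subst hwnil
    simp only [List.nil_append] at hsp hte
    exact ⟨hsp.symm, hte.symm⟩
  · rw [hval, zero_mul] at h1
    have := prod_ip hS hq
    rw [h1, zero_mul] at this
    exact (hS.zero_ne_one this).elim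

theorem lambda_nonempty : Λ.Nonempty := by
  by_contra h
  rw [Set.not_nonempty_iff_eq_empty] at h
  have h1 : (1 : S) ∈ Subsemigroup.closure (Λ ∪ inv '' Λ) := by rw [hS.generates]; trivial
  rw [h] at h1
  simp only [Set.image_empty, Set.union_empty, Subsemigroup.closure_empty] at h1
  exact h1

/-- normal form existence -/
theorem nf_exists (a : S) : a = 0 ∨ ∃ p q, Wd Λ p ∧ Wd Λ q ∧ a = ip inv p * q.prod := by
  have ha : a ∈ Subsemigroup.closure (Λ ∪ inv '' Λ) := by rw [hS.generates]; trivial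
  induction ha using Subsemigroup.closure_induction with
  | mem b hb =>
    rcases hb with hb | ⟨y, hy, rfl⟩
    · exact Or.inr ⟨[], [b], wd_nil, wd_singleton hb, by simp⟩
    · exact Or.inr ⟨[y], [], wd_singleton hy, wd_nil, by simp [ip_singleton]⟩
  | mul b c _ _ ihb ihc =>
    rcases ihb with rfl | ⟨p, q, hp, hq, rfl⟩
    · exact Or.inl (zero_mul c)
    rcases ihc with rfl | ⟨p', q', hp', hq', rfl⟩
    · exact Or.inl (mul_zero _)
    have key : (ip inv p * q.prod) * (ip inv p' * q'.prod)
        = ip inv p * ((q.prod * ip inv p') * q'.prod) := by simp [mul_assoc]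
    rcases tri hS p' hp' q hq with ⟨w, hw, _, hval⟩ | ⟨w, hw, _, hval⟩ | hval
    · refine Or.inr ⟨p, w ++ q', hp, hw.append hq', ?_⟩
      rw [key, hval, ← List.prod_append]
    · refine Or.inr ⟨w ++ p, q', (hw.append hp), hq', ?_⟩
      rw [key, hval, ip_append, mul_assoc]
    · exact Or.inl (by rw [key, hval, zero_mul, mul_zero])

/-- solution sets of `u t inv(v) = 1` are finite -/
theorem sol_finite {u v : List S} (hu : Wd Λ u) (hv : Wd Λ v) :
    {t : S | u.prod * t * ip inv v = 1}.Finite := by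
  refine Set.Finite.subset (Set.Finite.image
    (fun i => ip inv (u.drop i) * (v.drop i).prod) (Set.finite_Iic u.length)) ?_
  intro t ht
  simp only [Set.mem_setOf_eq] at ht
  have ht0 : t ≠ 0 := by
    rintro rfl
    rw [mul_zero, zero_mul] at ht
    exact hS.zero_ne_one ht
  rcases nf_exists hS t with rfl | ⟨s, w, hs, hw, rfl⟩
  · exact absurd rfl ht0
  have heq : (u.prod * ip inv s) * (w.prod * ip inv v) = 1 := by
    rw [← ht]; simp [mul_assoc]
  have mem0 : ip inv s * w.prod ∈
      (fun i => ip inv (u.drop i) * (v.drop i).prod) '' Set.Iic u.length →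
      ip inv s * w.prod ∈ _ := id
  rcases tri hS s hs u hu with ⟨w1, hw1, hus, hA⟩ | ⟨w1, hw1, hsu, hA⟩ | hA
  · rcases tri hS v hv w hw with ⟨w2, hw2, hwv, hB⟩ | ⟨w2, hw2, hvw, hB⟩ | hB
    · -- 1 = w1.prod * w2.prod
      rw [hA, hB, ← List.prod_append] at heq
      have := prod_eq_one hS (hw1.append hw2) heq
      rcases List.append_eq_nil_iff.1 this with ⟨rfl, rfl⟩
      simp only [List.nil_append] at hus hwv
      exact ⟨0, by simp, by simp [hus, hwv]⟩
    · -- 1 = w1.prod * ip w2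
      rw [hA, hB] at heq
      have hww : w1 = w2 := prod_ip_eq_one hS hw1 hw2 heq
      subst hww
      refine ⟨w1.length, by simp [hus, List.length_append], ?_⟩
      simp only [hus, hvw, List.drop_left]
    · rw [hA, hB, mul_zero] at heq
      exact (hS.zero_ne_one heq).elim
  · rcases tri hS v hv w hw with ⟨w2, hw2, hwv, hB⟩ | ⟨w2, hw2, hvw, hB⟩ | hB
    · rw [hA, hB] at heq
      obtain ⟨h1, h2⟩ := ip_prod_eq_one' hS hw1 hw2 heq
      subst h1; subst h2
      simp only [List.nil_append] at hsu hwv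
      exact ⟨0, by simp, by simp [← hsu, hwv]⟩
    · rw [hA, hB, ← ip_append] at heq
      have := ip_eq_one hS (hw2.append hw1) heq
      rcases List.append_eq_nil_iff.1 this with ⟨rfl, rfl⟩
      simp only [List.nil_append] at hsu hvw
      exact ⟨0, by simp, by simp [← hsu, ← hvw]⟩
    · rw [hA, hB, mul_zero] at heq
      exact (hS.zero_ne_one heq).elim
  · rw [hA, zero_mul] at heq
    exact (hS.zero_ne_one heq).elim

theorem pow_cancel {x : S} (hx : x ∈ Λ) : ∀ k : ℕ, x ^ k * (inv x) ^ k = 1 := by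
  intro k
  induction k with
  | zero => simp
  | succ k ih =>
    rw [pow_succ, pow_succ']
    calc x ^ k * x * (inv x * inv x ^ k)
        = x ^ k * (x * inv x) * inv x ^ k := by simp [mul_assoc]
    _ = 1 := by rw [hS.gen_unit x hx, mul_one, ih]

theorem mul_pow_cancel {x : S} (hx : x ∈ Λ) (b : S) (k : ℕ) :
    b * x ^ k * (inv x) ^ k = b := by
  rw [mul_assoc, pow_cancel hS hx, mul_one]

theorem mul_gen_inv_cancel {x : S} (hx : x ∈ Λ) (b : S) : b * x * inv x = b := by
  rw [mul_assoc, hS.gen_unit x hx, mul_one]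

omit hS in
theorem prod_mul_pow {x : S} (q : List S) (k : ℕ) :
    q.prod * x ^ k = (q ++ List.replicate k x).prod := by
  rw [List.prod_append, List.prod_replicate]

theorem gen_ne_zero {x : S} (hx : x ∈ Λ) : x ≠ 0 := by
  intro h
  have := hS.gen_unit x hx
  rw [h, zero_mul] at this
  exact hS.zero_ne_one this

theorem mul_ip_concat {x : S} (hx : x ∈ Λ) (p' : List S) :
    x * ip inv (p' ++ [x]) = ip inv p' := by
  rw [ip_concat, ← mul_assoc, hS.gen_unit x hx, one_mul]

theorem mul_ip_concat_ne {x y : S} (hx : x ∈ Λ) (hy : y ∈ Λ) (hxy : y ≠ x) (p' : List S) :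
    x * ip inv (p' ++ [y]) = 0 := by
  rw [ip_concat, ← mul_assoc, hS.gen_zero x hx y hy (Ne.symm hxy), zero_mul]

theorem prod_concat_inv {x : S} (hx : x ∈ Λ) (q' : List S) :
    (q' ++ [x]).prod * inv x = q'.prod := by
  rw [List.prod_append, List.prod_cons, List.prod_nil, mul_one]
  exact mul_gen_inv_cancel hS hx _

theorem prod_concat_inv_ne {x y : S} (hx : x ∈ Λ) (hy : y ∈ Λ) (hxy : y ≠ x) (q' : List S) :
    (q' ++ [y]).prod * inv x = 0 := by
  rw [List.prod_append, List.prod_cons, List.prod_nil, mul_one, mul_assoc,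
    hS.gen_zero y hy x hx hxy, mul_zero]

omit hS in
theorem el_mul_pow {x : S} (p q : List S) (k : ℕ) :
    (ip inv p * q.prod) * x ^ k = ip inv p * (q ++ List.replicate k x).prod := by
  rw [mul_assoc, prod_mul_pow]

theorem prod_ne_zero {q : List S} (hq : Wd Λ q) : q.prod ≠ 0 := by
  intro h
  have := prod_ip hS hq
  rw [h, zero_mul] at this
  exact hS.zero_ne_one this

theorem mul_pow_inj {x : S} (hx : x ∈ Λ) {ζ : S} (hζ : ζ ≠ 0) :
    Function.Injective (fun k : ℕ => ζ * x ^ k) := by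
  intro k m h
  rcases nf_exists hS ζ with rfl | ⟨p, q, hp, hq, rfl⟩
  · exact absurd rfl hζ
  simp only [el_mul_pow] at h
  have := (el_inj hS hp (hq.append (wd_replicate hx k)) hp
    (hq.append (wd_replicate hx m)) h).2
  have hlen := congrArg List.length this
  simpa using hlen

/-- solutions `ζ` of `ζ * x ^ k = e` over all `k`, for fixed `e ≠ 0`, form a finite set -/
theorem sol_pow_finite {x : S} (hx : x ∈ Λ) {e : S} (he : e ≠ 0) :
    {ζ : S | ζ ≠ 0 ∧ ∃ k : ℕ, ζ * x ^ k = e}.Finite := by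
  rcases nf_exists hS e with rfl | ⟨pe, qe, hpe, hqe, rfl⟩
  · exact absurd rfl he
  refine Set.Finite.subset (Set.Finite.image (fun k => (ip inv pe * qe.prod) * (inv x) ^ k)
    (Set.finite_Iic qe.length)) ?_
  rintro ζ ⟨hζ0, k, hk⟩
  rcases nf_exists hS ζ with rfl | ⟨p, q, hp, hq, rfl⟩
  · exact absurd rfl hζ0
  rw [el_mul_pow] at hk
  obtain ⟨hpp, hqq⟩ := el_inj hS hp (hq.append (wd_replicate hx k)) hpe hqe hk
  refine ⟨k, ?_, ?_⟩
  · have hlen := congrArg List.length hqq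
    simp only [List.length_append, List.length_replicate] at hlen
    simp only [Set.mem_Iic]
    omega
  · show (ip inv pe * qe.prod) * (inv x) ^ k = ip inv p * q.prod
    calc (ip inv pe * qe.prod) * (inv x) ^ k
        = (ip inv p * (q ++ List.replicate k x).prod) * (inv x) ^ k := by rw [hk]
    _ = ((ip inv p * q.prod) * x ^ k) * (inv x) ^ k := by rw [← el_mul_pow]
    _ = ip inv p * q.prod := mul_pow_cancel hS hx _ k

end PolyAux
-- TOPOLOGY PART (appended for testing)
namespace PolyAux

variable {S : Type*} [MonoidWithZero S] {inv : S → S} {Λ : Set S}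
variable (hS : IsPolycyclicMonoid S inv Λ)
variable [TopologicalSpace S] [T2Space S]
variable (hl : ∀ a : S, Continuous (fun x : S => a * x))
variable (hr : ∀ a : S, Continuous (fun x : S => x * a))
include hS hl hr

set_option linter.unusedSectionVars false

theorem one_isolated : IsOpen {(1 : S)} := by
  obtain ⟨x₀, hx₀⟩ := lambda_nonempty hS
  rw [isOpen_singleton_iff_punctured_nhds]
  by_contra hne
  haveI hNB : Filter.NeBot (nhdsWithin (1:S) {(1:S)}ᶜ) := ⟨hne⟩
  classical
  set C1 : Set S := {a | ∃ p q, Wd Λ p ∧ Wd Λ q ∧ p ≠ [] ∧ q ≠ [] ∧ a = ip inv p * q.prod}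
    with hC1
  set C2 : Set S := {a | ∃ q, Wd Λ q ∧ q ≠ [] ∧ a = q.prod} with hC2
  set C3 : Set S := {a | ∃ p, Wd Λ p ∧ p ≠ [] ∧ a = ip inv p} with hC3
  have hcover : ({(1:S)}ᶜ : Set S) ⊆ {0} ∪ (C1 ∪ (C2 ∪ C3)) := by
    intro a ha
    have hane : a ≠ 1 := ha
    rcases nf_exists hS a with rfl | ⟨p, q, hp, hq, rfl⟩
    · exact Or.inl rfl
    rcases List.eq_nil_or_concat p with rfl | ⟨p', y, hpe⟩
    · rcases List.eq_nil_or_concat q with rfl | ⟨q', z, hqe⟩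
      · exact absurd (by simp) hane
      · refine Or.inr (Or.inr (Or.inl ⟨q, hq, ?_, by simp⟩))
        rw [hqe]; simp
    · rcases List.eq_nil_or_concat q with rfl | ⟨q', z, hqe⟩
      · refine Or.inr (Or.inr (Or.inr ⟨p, hp, ?_, by simp⟩))
        rw [hpe]; simp
      · refine Or.inr (Or.inl ⟨p, q, hp, hq, ?_, ?_, rfl⟩)
        · rw [hpe]; simp
        · rw [hqe]; simp
  have hmono : nhdsWithin (1:S) ({(1:S)}ᶜ) ≤
      nhdsWithin (1:S) ({0} ∪ (C1 ∪ (C2 ∪ C3))) := nhdsWithin_mono _ hcover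
  rw [nhdsWithin_union, nhdsWithin_union, nhdsWithin_union] at hmono
  have hNB2 : Filter.NeBot (nhdsWithin (1:S) {(0:S)} ⊔ (nhdsWithin (1:S) C1 ⊔
      (nhdsWithin (1:S) C2 ⊔ nhdsWithin (1:S) C3))) := Filter.neBot_of_le hmono
  have hx₀ne : inv x₀ * x₀ ≠ 1 := fun h => no_unit hS hx₀ h
  rcases Filter.sup_neBot.1 hNB2 with h0 | hrest
  · -- zero case
    haveI := h0
    have h1 : (1:S) ∈ closure ({0} : Set S) := mem_closure_iff_nhdsWithin_neBot.2 h0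
    rw [IsClosed.closure_eq isClosed_singleton] at h1
    exact hS.zero_ne_one (Set.mem_singleton_iff.1 h1).symm
  rcases Filter.sup_neBot.1 hrest with h1 | hrest2
  · -- C1 case
    haveI := h1
    set F := nhdsWithin (1:S) C1
    have hidT : Filter.Tendsto (fun s : S => s) F (nhds 1) :=
      Filter.Tendsto.mono_right Filter.tendsto_id nhdsWithin_le_nhds
    have hTa : Filter.Tendsto (fun s : S => x₀ * s) F (nhds x₀) := by
      have := ((hl x₀).tendsto 1).comp hidT
      rwa [mul_one] at this
    have hTb : Filter.Tendsto (fun s : S => (x₀ * s) * inv x₀) F (nhds 1) := by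
      have := ((hr (inv x₀)).tendsto x₀).comp hTa
      rwa [hS.gen_unit x₀ hx₀] at this
    have hnz : ∀ᶠ s in F, (x₀ * s) * inv x₀ ≠ 0 :=
      hTb.eventually_ne (Ne.symm hS.zero_ne_one)
    have hmem : ∀ᶠ s in F, s ∈ C1 := eventually_mem_nhdsWithin
    have hid2 : ∀ᶠ s in F, inv x₀ * ((x₀ * s) * inv x₀) * x₀ = s := by
      filter_upwards [hnz, hmem] with s hs0 hsC
      obtain ⟨p, q, hp, hq, hpne, hqne, rfl⟩ := hsC
      rcases List.eq_nil_or_concat p with rfl | ⟨p', y, hpe⟩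
      · exact absurd rfl hpne
      rcases List.eq_nil_or_concat q with rfl | ⟨q', z, hqe⟩
      · exact absurd rfl hqne
      rw [List.concat_eq_append] at hpe hqe
      subst hpe; subst hqe
      have hy : y ∈ Λ := hp.of_append_right y (List.mem_singleton.2 rfl)
      have hz : z ∈ Λ := hq.of_append_right z (List.mem_singleton.2 rfl)
      have hassoc : (x₀ * (ip inv (p' ++ [y]) * (q' ++ [z]).prod)) * inv x₀
          = (x₀ * ip inv (p' ++ [y])) * ((q' ++ [z]).prod * inv x₀) := by
        simp [mul_assoc]
      by_cases hyx : y = x₀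
      · by_cases hzx : z = x₀
        · rw [hyx, hzx]
          have hassoc2 : (x₀ * (ip inv (p' ++ [x₀]) * (q' ++ [x₀]).prod)) * inv x₀
              = (x₀ * ip inv (p' ++ [x₀])) * ((q' ++ [x₀]).prod * inv x₀) := by
            simp [mul_assoc]
          rw [hassoc2, mul_ip_concat hS hx₀, prod_concat_inv hS hx₀]
          calc inv x₀ * (ip inv p' * q'.prod) * x₀
              = (inv x₀ * ip inv p') * (q'.prod * x₀) := by simp [mul_assoc]
          _ = ip inv (p' ++ [x₀]) * (q' ++ [x₀]).prod := by
                rw [ip_concat, List.prod_append, List.prod_cons, List.prod_nil, mul_one]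
        · exfalso; apply hs0
          rw [hassoc, prod_concat_inv_ne hS hx₀ hz hzx, mul_zero]
      · exfalso; apply hs0
        rw [hassoc, mul_ip_concat_ne hS hx₀ hy hyx, zero_mul]
    have hT3 : Filter.Tendsto (fun s : S => inv x₀ * ((x₀ * s) * inv x₀) * x₀) F
        (nhds (inv x₀ * x₀)) := by
      have h4 : Filter.Tendsto (fun s : S => inv x₀ * ((x₀ * s) * inv x₀)) F
          (nhds (inv x₀ * 1)) := ((hl (inv x₀)).tendsto 1).comp hTb
      have h5 := ((hr x₀).tendsto (inv x₀ * 1)).comp h4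
      rwa [mul_one] at h5
    exact hx₀ne (tendsto_nhds_unique (hT3.congr' hid2) hidT)
  rcases Filter.sup_neBot.1 hrest2 with h2 | h3
  · -- C2 case
    haveI := h2
    set F := nhdsWithin (1:S) C2
    have hidT : Filter.Tendsto (fun s : S => s) F (nhds 1) :=
      Filter.Tendsto.mono_right Filter.tendsto_id nhdsWithin_le_nhds
    have hT1 : Filter.Tendsto (fun s : S => s * inv x₀) F (nhds (inv x₀)) := by
      have := ((hr (inv x₀)).tendsto 1).comp hidT
      rwa [one_mul] at this
    have hnz : ∀ᶠ s in F, s * inv x₀ ≠ 0 := hT1.eventually_ne (inv_ne_zero hS hx₀)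
    have hmem : ∀ᶠ s in F, s ∈ C2 := eventually_mem_nhdsWithin
    have hid2 : ∀ᶠ s in F, (s * inv x₀) * x₀ = s := by
      filter_upwards [hnz, hmem] with s hs0 hsC
      obtain ⟨q, hq, hqne, rfl⟩ := hsC
      rcases List.eq_nil_or_concat q with rfl | ⟨q', z, hqe⟩
      · exact absurd rfl hqne
      rw [List.concat_eq_append] at hqe; subst hqe
      have hz : z ∈ Λ := hq.of_append_right z (List.mem_singleton.2 rfl)
      by_cases hzx : z = x₀
      · subst hzx
        rw [prod_concat_inv hS hx₀, List.prod_append, List.prod_cons, List.prod_nil, mul_one]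
      · exfalso; exact hs0 (prod_concat_inv_ne hS hx₀ hz hzx q')
    have hT2 : Filter.Tendsto (fun s : S => (s * inv x₀) * x₀) F (nhds (inv x₀ * x₀)) :=
      ((hr x₀).tendsto (inv x₀)).comp hT1
    exact hx₀ne (tendsto_nhds_unique (hT2.congr' hid2) hidT)
  · -- C3 case
    haveI := h3
    set F := nhdsWithin (1:S) C3
    have hidT : Filter.Tendsto (fun s : S => s) F (nhds 1) :=
      Filter.Tendsto.mono_right Filter.tendsto_id nhdsWithin_le_nhds
    have hT1 : Filter.Tendsto (fun s : S => x₀ * s) F (nhds x₀) := by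
      have := ((hl x₀).tendsto 1).comp hidT
      rwa [mul_one] at this
    have hnz : ∀ᶠ s in F, x₀ * s ≠ 0 := hT1.eventually_ne (gen_ne_zero hS hx₀)
    have hmem : ∀ᶠ s in F, s ∈ C3 := eventually_mem_nhdsWithin
    have hid2 : ∀ᶠ s in F, inv x₀ * (x₀ * s) = s := by
      filter_upwards [hnz, hmem] with s hs0 hsC
      obtain ⟨p, hp, hpne, rfl⟩ := hsC
      rcases List.eq_nil_or_concat p with rfl | ⟨p', y, hpe⟩
      · exact absurd rfl hpne
      rw [List.concat_eq_append] at hpe; subst hpe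
      have hy : y ∈ Λ := hp.of_append_right y (List.mem_singleton.2 rfl)
      by_cases hyx : y = x₀
      · subst hyx
        rw [mul_ip_concat hS hx₀, ip_concat]
      · exfalso; exact hs0 (mul_ip_concat_ne hS hx₀ hy hyx p')
    have hT2 : Filter.Tendsto (fun s : S => inv x₀ * (x₀ * s)) F (nhds (inv x₀ * x₀)) :=
      ((hl (inv x₀)).tendsto x₀).comp hT1
    exact hx₀ne (tendsto_nhds_unique (hT2.congr' hid2) hidT)

theorem isolated_of_ne_zero (a : S) (ha : a ≠ 0) : IsOpen ({a} : Set S) := by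
  rcases nf_exists hS a with rfl | ⟨p, q, hp, hq, rfl⟩
  · exact absurd rfl ha
  have hc : Continuous (fun t : S => p.prod * t * ip inv q) := by
    have : (fun t : S => p.prod * t * ip inv q)
        = (fun u : S => u * ip inv q) ∘ (fun t : S => p.prod * t) := rfl
    rw [this]; exact (hr _).comp (hl _)
  have hUopen : IsOpen ((fun t : S => p.prod * t * ip inv q) ⁻¹' {1}) :=
    (one_isolated hS hl hr).preimage hc
  have hUfin : ((fun t : S => p.prod * t * ip inv q) ⁻¹' {1}).Finite := by
    have : ((fun t : S => p.prod * t * ip inv q) ⁻¹' {1})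
        = {t : S | p.prod * t * ip inv q = 1} := by
      ext t; simp
    rw [this]; exact sol_finite hS hp hq
  have haU : (ip inv p * q.prod) ∈ ((fun t : S => p.prod * t * ip inv q) ⁻¹' {1}) := by
    simp only [Set.mem_preimage, Set.mem_singleton_iff]
    exact el_one_eq hS hp hq
  exact isOpen_singleton_of_finite_mem_nhds _ (hUopen.mem_nhds haU) hUfin

end PolyAux

namespace PolyAux

variable {S : Type*} [MonoidWithZero S] {inv : S → S} {Λ : Set S}
variable (hS : IsPolycyclicMonoid S inv Λ)
variable [TopologicalSpace S] [T2Space S] [LocallyCompactSpace S]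
variable (hl : ∀ a : S, Continuous (fun x : S => a * x))
variable (hr : ∀ a : S, Continuous (fun x : S => x * a))
include hS hl hr

set_option linter.unusedSectionVars false
set_option maxHeartbeats 1000000

theorem cofinite_of_not_isolated (h0 : ¬ IsOpen ({(0:S)} : Set S)) :
    ∀ U ∈ nhds (0:S), (Uᶜ : Set S).Finite := by
  classical
  obtain ⟨K, hKnhds, -, hKcomp⟩ :=
    LocallyCompactSpace.local_compact_nhds (0:S) Set.univ Filter.univ_mem
  have h0K : (0:S) ∈ K := mem_of_mem_nhds hKnhds
  -- (t5a): K minus any neighborhood of 0 is finite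
  have hKV : ∀ V ∈ nhds (0:S), (K \ V).Finite := by
    intro V hV
    obtain ⟨O, hOV, hOopen, hO0⟩ := mem_nhds_iff.1 hV
    have hCcomp : IsCompact (K \ O) := hKcomp.diff hOopen
    have hcover : (K \ O) ⊆ ⋃ a : {b : S // b ≠ 0}, ({a.1} : Set S) := by
      intro a ha
      have ha0 : a ≠ 0 := by rintro rfl; exact ha.2 hO0
      exact Set.mem_iUnion.2 ⟨⟨a, ha0⟩, rfl⟩
    obtain ⟨t, ht⟩ := hCcomp.elim_finite_subcover
      (fun a : {b : S // b ≠ 0} => ({a.1} : Set S))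
      (fun a => isolated_of_ne_zero hS hl hr a.1 a.2) hcover
    have hfin : (K \ O).Finite := Set.Finite.subset
      (t.finite_toSet.biUnion (fun a _ => Set.finite_singleton a.1)) ht
    exact hfin.subset (fun a ha => ⟨ha.1, fun h => ha.2 (hOV h)⟩)
  -- budget lemma
  have hbud : ∀ c d : S, {a : S | a ∈ K ∧ c * a * d ∉ K}.Finite := by
    intro c d
    have hc : Continuous (fun t : S => c * t * d) := by
      have h : (fun t : S => c * t * d) = (fun u : S => u * d) ∘ (fun t : S => c * t) := rfl
      rw [h]; exact (hr _).comp (hl _)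
    have hmem : (fun t : S => c * t * d) ⁻¹' (interior K) ∈ nhds (0:S) := by
      apply hc.continuousAt.preimage_mem_nhds
      have h00 : c * (0:S) * d = 0 := by rw [mul_zero, zero_mul]
      rw [h00]
      exact interior_mem_nhds.2 hKnhds
    refine (hKV _ hmem).subset ?_
    rintro a ⟨haK, had⟩
    exact ⟨haK, fun hmem2 => had (interior_subset hmem2)⟩
  -- A = K \ {0} is infinite
  have hAinf : (K \ {(0:S)}).Infinite := by
    intro hfin
    apply h0
    have hsing : ({(0:S)} : Set S) ∈ nhds (0:S) := by
      have h1 : (K \ {(0:S)})ᶜ ∈ nhds (0:S) := by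
        refine IsOpen.mem_nhds hfin.isClosed.isOpen_compl ?_
        intro h; exact h.2 rfl
      have h2 : K ∩ (K \ {(0:S)})ᶜ ∈ nhds (0:S) := Filter.inter_mem hKnhds h1
      have h3 : K ∩ (K \ {(0:S)})ᶜ = {(0:S)} := by
        ext a
        constructor
        · rintro ⟨haK, hac⟩
          by_contra hne
          exact hac ⟨haK, hne⟩
        · rintro rfl
          exact ⟨h0K, fun h => h.2 rfl⟩
      rwa [h3] at h2
    obtain ⟨O, hO1, hO2, hO3⟩ := mem_nhds_iff.1 hsing
    have : O = {(0:S)} := Set.Subset.antisymm hO1 (Set.singleton_subset_iff.2 hO3)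
    rwa [← this]
  -- main: Kᶜ is finite
  suffices hKc : (Kᶜ : Set S).Finite by
    intro U hU
    have hsub : (Uᶜ : Set S) ⊆ Kᶜ ∪ (K \ U) := by
      intro a ha
      by_cases h : a ∈ K
      · exact Or.inr ⟨h, ha⟩
      · exact Or.inl h
    exact (hKc.union (hKV U hU)).subset hsub
  by_contra hZinf
  obtain ⟨x₀, hx₀⟩ := lambda_nonempty hS
  have hZne0 : ∀ ζ ∈ (Kᶜ : Set S), ζ ≠ 0 := fun ζ hζ h => hζ (h ▸ h0K)
  have hpow_ne : ∀ a : S, a ≠ 0 → ∀ k : ℕ, a * x₀ ^ k ≠ 0 := by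
    intro a ha k
    rcases nf_exists hS a with rfl | ⟨p, q, hp, hq, rfl⟩
    · exact absurd rfl ha
    rw [el_mul_pow]
    exact el_ne_zero hS hp (hq.append (wd_replicate hx₀ k))
  -- elementary budget sets
  have hEm : {a : S | a ∈ K ∧ a * inv x₀ ∉ K}.Finite := by
    have h := hbud 1 (inv x₀)
    simpa [one_mul] using h
  have hEp : {a : S | a ∈ K ∧ a * x₀ ∉ K}.Finite := by
    have h := hbud 1 x₀
    simpa [one_mul] using h
  -- chain-bad sets
  have hBadZ : {ζ : S | ζ ∈ (Kᶜ : Set S) ∧ ∃ k : ℕ, ζ * x₀ ^ k ∈ K}.Finite := by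
    have hsub : {ζ : S | ζ ∈ (Kᶜ : Set S) ∧ ∃ k : ℕ, ζ * x₀ ^ k ∈ K} ⊆
        ⋃ e ∈ {a : S | a ∈ K ∧ a * inv x₀ ∉ K},
          {ζ : S | ζ ≠ 0 ∧ ∃ k : ℕ, ζ * x₀ ^ k = e} := by
      rintro ζ ⟨hζZ, hex⟩
      have hζ0 : ζ ≠ 0 := hZne0 ζ hζZ
      have hspec : ζ * x₀ ^ (Nat.find hex) ∈ K := Nat.find_spec hex
      have hk₀pos : Nat.find hex ≠ 0 := by
        intro h
        rw [h, pow_zero, mul_one] at hspec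
        exact hζZ hspec
      obtain ⟨m, hm⟩ := Nat.exists_eq_succ_of_ne_zero hk₀pos
      rw [hm] at hspec
      have hmin : ζ * x₀ ^ m ∉ K := by
        have := Nat.find_min hex (by omega : m < Nat.find hex)
        exact this
      have hcancel : ζ * x₀ ^ (m + 1) * inv x₀ = ζ * x₀ ^ m := by
        rw [pow_succ, ← mul_assoc]
        exact mul_gen_inv_cancel hS hx₀ _
      refine Set.mem_biUnion (show ζ * x₀ ^ (m+1) ∈ _ from ⟨hspec, ?_⟩) ⟨hζ0, m+1, rfl⟩
      rw [hcancel]; exact hmin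
    refine Set.Finite.subset (Set.Finite.biUnion hEm ?_) hsub
    intro e he
    have he0 : e ≠ 0 := by
      rintro rfl
      exact he.2 (by rw [zero_mul]; exact h0K)
    exact sol_pow_finite hS hx₀ he0
  have hBadA : {a : S | a ∈ K ∧ a ≠ 0 ∧ ∃ k : ℕ, a * x₀ ^ k ∉ K}.Finite := by
    have hsub : {a : S | a ∈ K ∧ a ≠ 0 ∧ ∃ k : ℕ, a * x₀ ^ k ∉ K} ⊆
        ⋃ e ∈ {b : S | b ∈ K ∧ b * x₀ ∉ K},
          {ζ : S | ζ ≠ 0 ∧ ∃ k : ℕ, ζ * x₀ ^ k = e} := by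
      rintro a ⟨haK, ha0, hex⟩
      have hspec : a * x₀ ^ (Nat.find hex) ∉ K := Nat.find_spec hex
      have hk₀pos : Nat.find hex ≠ 0 := by
        intro h
        rw [h, pow_zero, mul_one] at hspec
        exact hspec haK
      obtain ⟨m, hm⟩ := Nat.exists_eq_succ_of_ne_zero hk₀pos
      rw [hm] at hspec
      have hmin : a * x₀ ^ m ∈ K := by
        have := Nat.find_min hex (by omega : m < Nat.find hex)
        by_contra hc
        exact this hc
      have hstep : (a * x₀ ^ m) * x₀ = a * x₀ ^ (m + 1) := by
        rw [pow_succ, mul_assoc]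
      refine Set.mem_biUnion (show a * x₀ ^ m ∈ _ from ⟨hmin, ?_⟩) ⟨ha0, m, rfl⟩
      rw [hstep]; exact hspec
    refine Set.Finite.subset (Set.Finite.biUnion hEp ?_) hsub
    intro e he
    have he0 : e ≠ 0 := by
      rintro rfl
      exact he.2 (by rw [zero_mul]; exact h0K)
    exact sol_pow_finite hS hx₀ he0
  -- STEP 1a : the set of words with product in K is infinite
  have hAWinf : {w : List S | Wd Λ w ∧ w.prod ∈ K}.Infinite := by
    obtain ⟨a, ⟨haA, haBad⟩⟩ := (hAinf.diff hBadA).nonempty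
    have haK : a ∈ K := haA.1
    have ha0 : a ≠ 0 := haA.2
    have hchain : ∀ k : ℕ, a * x₀ ^ k ∈ K := by
      intro k
      by_contra hk
      exact haBad ⟨haK, ha0, k, hk⟩
    obtain ⟨p, q, hp, hq, hae⟩ := (nf_exists hS a).resolve_left ha0
    have hinj : Function.Injective (fun k : ℕ => a * x₀ ^ k) := mul_pow_inj hS hx₀ ha0
    have hbadk : {k : ℕ | (q ++ List.replicate k x₀).prod ∉ K}.Finite := by
      have hpre : {k : ℕ | (q ++ List.replicate k x₀).prod ∉ K} ⊆
          (fun k : ℕ => a * x₀ ^ k) ⁻¹' {b : S | b ∈ K ∧ p.prod * b * 1 ∉ K} := by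
        intro k hk
        refine ⟨hchain k, ?_⟩
        have : p.prod * (a * x₀ ^ k) * 1 = (q ++ List.replicate k x₀).prod := by
          rw [mul_one, hae, el_mul_pow, ← mul_assoc, prod_ip hS hp, one_mul]
        rw [this]
        exact hk
      exact Set.Finite.subset (Set.Finite.preimage (hinj.injOn) (hbud p.prod 1)) hpre
    have hgood : {k : ℕ | (q ++ List.replicate k x₀).prod ∉ K}ᶜ.Infinite :=
      hbadk.infinite_compl
    have himg : ((fun k : ℕ => q ++ List.replicate k x₀) ''
        {k : ℕ | (q ++ List.replicate k x₀).prod ∉ K}ᶜ).Infinite := by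
      refine Set.Infinite.image ?_ hgood
      intro k _ m _ h
      have := congrArg List.length h
      simpa using this
    refine himg.mono ?_
    rintro w ⟨k, hk, rfl⟩
    refine ⟨hq.append (wd_replicate hx₀ k), ?_⟩
    simpa using hk
  -- STEP 1b : the set of words with product in Kᶜ is infinite
  have hZWinf : {w : List S | Wd Λ w ∧ w.prod ∈ (Kᶜ : Set S)}.Infinite := by
    have hZinf' : (Kᶜ : Set S).Infinite := hZinf
    obtain ⟨ζ, ⟨hζZ, hζBad⟩⟩ := (hZinf'.diff hBadZ).nonempty
    have hζ0 : ζ ≠ 0 := hZne0 ζ hζZ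
    have hchain : ∀ k : ℕ, ζ * x₀ ^ k ∈ (Kᶜ : Set S) := by
      intro k
      by_contra hk
      exact hζBad ⟨hζZ, k, not_not.1 (fun h => hk h)⟩
    obtain ⟨p, q, hp, hq, hζe⟩ := (nf_exists hS ζ).resolve_left hζ0
    have hbadk : {k : ℕ | (q ++ List.replicate k x₀).prod ∈ K}.Finite := by
      have hprodinj : Function.Injective (fun k : ℕ => (q ++ List.replicate k x₀).prod) := by
        intro k m h
        have h2 := prod_inj hS (hq.append (wd_replicate hx₀ k))
          (hq.append (wd_replicate hx₀ m)) h
        have := congrArg List.length h2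
        simpa using this
      have hpre : {k : ℕ | (q ++ List.replicate k x₀).prod ∈ K} ⊆
          (fun k : ℕ => (q ++ List.replicate k x₀).prod) ⁻¹'
            {b : S | b ∈ K ∧ ip inv p * b * 1 ∉ K} := by
        intro k hk
        refine ⟨hk, ?_⟩
        have : ip inv p * (q ++ List.replicate k x₀).prod * 1 = ζ * x₀ ^ k := by
          rw [mul_one, hζe, el_mul_pow]
        rw [this]
        exact hchain k
      exact Set.Finite.subset (Set.Finite.preimage (hprodinj.injOn) (hbud (ip inv p) 1)) hpre
    have hgood : {k : ℕ | (q ++ List.replicate k x₀).prod ∈ K}ᶜ.Infinite :=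
      hbadk.infinite_compl
    have himg : ((fun k : ℕ => q ++ List.replicate k x₀) ''
        {k : ℕ | (q ++ List.replicate k x₀).prod ∈ K}ᶜ).Infinite := by
      refine Set.Infinite.image ?_ hgood
      intro k _ m _ h
      have := congrArg List.length h
      simpa using this
    refine himg.mono ?_
    rintro w ⟨k, hk, rfl⟩
    exact ⟨hq.append (wd_replicate hx₀ k), hk⟩
  -- STEP 2 : choose a good word a*
  have hWBadA : {w : List S | Wd Λ w ∧ w.prod ∈
      {a : S | a ∈ K ∧ a ≠ 0 ∧ ∃ k : ℕ, a * x₀ ^ k ∉ K}}.Finite := by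
    refine Set.Finite.of_finite_image (f := List.prod) (hBadA.subset ?_) ?_
    · rintro b ⟨w, ⟨hw, hwmem⟩, rfl⟩
      exact hwmem
    · rintro w ⟨hw, _⟩ w' ⟨hw', _⟩ h
      exact prod_inj hS hw hw' h
  obtain ⟨astar, ⟨⟨hastarW, hastarK⟩, hastarBad⟩⟩ := (hAWinf.diff hWBadA).nonempty
  have hastar0 : astar.prod ≠ 0 := prod_ne_zero hS hastarW
  have hachain : ∀ k : ℕ, astar.prod * x₀ ^ k ∈ K := by
    intro k
    by_contra hk
    exact hastarBad ⟨hastarW, hastarK, hastar0, k, hk⟩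
  -- bad ζ sets
  have hD : {b : S | b ∈ K ∧ b * ip inv astar ∉ K}.Finite := by
    have h := hbud 1 (ip inv astar)
    simpa [one_mul] using h
  have hptoa : ∀ w : List S, (w ++ astar).prod * ip inv astar = w.prod := by
    intro w
    rw [List.prod_append, mul_assoc, prod_ip hS hastarW, mul_one]
  have hBadc1 : {w : List S | Wd Λ w ∧ w.prod ∈ (Kᶜ : Set S) ∧
      (w ++ astar).prod ∈ K}.Finite := by
    refine Set.Finite.of_finite_image (f := fun w : List S => (w ++ astar).prod)
      (hD.subset ?_) ?_
    · rintro b ⟨w, ⟨hw, hwZ, hwK⟩, rfl⟩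
      refine ⟨hwK, ?_⟩
      rw [hptoa w]
      exact hwZ
    · rintro w ⟨hw, _⟩ w' ⟨hw', _⟩ h
      have h2 := prod_inj hS (hw.append hastarW) (hw'.append hastarW) h
      exact List.append_cancel_right h2
  have hBadc2 : {w : List S | Wd Λ w ∧ (w ++ astar).prod ∈ (Kᶜ : Set S) ∧
      ∃ k : ℕ, (w ++ astar).prod * x₀ ^ k ∈ K}.Finite := by
    refine Set.Finite.of_finite_image (f := fun w : List S => (w ++ astar).prod)
      (hBadZ.subset ?_) ?_
    · rintro b ⟨w, ⟨hw, hwZ, hk⟩, rfl⟩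
      exact ⟨hwZ, hk⟩
    · rintro w ⟨hw, _⟩ w' ⟨hw', _⟩ h
      have h2 := prod_inj hS (hw.append hastarW) (hw'.append hastarW) h
      exact List.append_cancel_right h2
  -- choose good ζ
  obtain ⟨ζ, ⟨⟨hζW, hζZ⟩, hζBad1⟩, hζBad2⟩ := ((hZWinf.diff hBadc1).diff hBadc2).nonempty
  have hc1 : (ζ ++ astar).prod ∈ (Kᶜ : Set S) := by
    by_contra h
    exact hζBad1 ⟨hζW, hζZ, not_not.1 h⟩
  have hc2 : ∀ k : ℕ, (ζ ++ astar).prod * x₀ ^ k ∈ (Kᶜ : Set S) := by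
    intro k
    by_contra h
    exact hζBad2 ⟨hζW, hc1, k, not_not.1 h⟩
  -- final clash
  have hG : {b : S | b ∈ K ∧ ζ.prod * b * 1 ∉ K}.Finite := hbud ζ.prod 1
  have hfinj : Function.Injective (fun k : ℕ => astar.prod * x₀ ^ k) :=
    mul_pow_inj hS hx₀ hastar0
  have hkbad : {k : ℕ | astar.prod * x₀ ^ k ∈
      {b : S | b ∈ K ∧ ζ.prod * b * 1 ∉ K}}.Finite :=
    Set.Finite.subset (Set.Finite.preimage (hfinj.injOn) hG) (fun k hk => hk)
  obtain ⟨k, hk⟩ := hkbad.infinite_compl.nonempty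
  have hkK : ζ.prod * (astar.prod * x₀ ^ k) * 1 ∈ K := by
    by_contra h
    exact hk ⟨hachain k, h⟩
  have hcontra : ζ.prod * (astar.prod * x₀ ^ k) * 1 = (ζ ++ astar).prod * x₀ ^ k := by
    rw [mul_one, List.prod_append, mul_assoc]
  rw [hcontra] at hkK
  exact hc2 k hkK

end PolyAux


/-- A Hausdorff locally compact semitopological polycyclic monoid is either
discrete or compact; if non-discrete, its topology is that of the one-point
compactification of the discrete space S \ {0}. -/
theorem stmt0 {S : Type*} [MonoidWithZero S] (inv : S → S) (Λ : Set S)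
    (hS : IsPolycyclicMonoid S inv Λ)
    [TopologicalSpace S] [T2Space S] [LocallyCompactSpace S]
    (hl : ∀ a : S, Continuous (fun x : S => a * x))
    (hr : ∀ a : S, Continuous (fun x : S => x * a)) :
    (DiscreteTopology S ∨ CompactSpace S) ∧
      (¬ DiscreteTopology S →
        ∀ U : Set S, IsOpen U ↔ ((0 : S) ∈ U → (Uᶜ).Finite)) := by
  classical
  by_cases h0 : IsOpen ({(0:S)} : Set S)
  · have hdisc : DiscreteTopology S := by
      rw [discreteTopology_iff_isOpen_singleton]
      intro a
      by_cases ha : a = 0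
      · rwa [ha]
      · exact PolyAux.isolated_of_ne_zero hS hl hr a ha
    exact ⟨Or.inl hdisc, fun hnd => absurd hdisc hnd⟩
  · have hcof := PolyAux.cofinite_of_not_isolated hS hl hr h0
    have hchar : ∀ U : Set S, IsOpen U ↔ ((0:S) ∈ U → (Uᶜ).Finite) := by
      intro U
      constructor
      · intro hU h0U
        exact hcof U (hU.mem_nhds h0U)
      · intro h
        by_cases h0U : (0:S) ∈ U
        · have hcl : IsClosed (Uᶜ) := (h h0U).isClosed
          have := hcl.isOpen_compl
          rwa [compl_compl] at this
        · have hU : U = ⋃ a ∈ U, ({a} : Set S) := by simp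
          rw [hU]
          refine isOpen_biUnion ?_
          intro a haU
          exact PolyAux.isolated_of_ne_zero hS hl hr a (fun hz => h0U (hz ▸ haU))
    have hcpt : CompactSpace S := by
      have hKc : IsCompact (Set.univ : Set S) := by
        obtain ⟨K, hKnhds, -, hKcomp⟩ :=
          LocallyCompactSpace.local_compact_nhds (0:S) Set.univ Filter.univ_mem
        have huniv : (Set.univ : Set S) = K ∪ Kᶜ := by simp
        rw [huniv]
        exact hKcomp.union ((hcof K hKnhds).isCompact)
      exact ⟨hKc⟩
    exact ⟨Or.inr hcpt, fun _ => hchar⟩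
end

section
/- Let S be a polycyclic monoid. For any non-zero elements a, b, c ∈ S, the set {x ∈ S : a·x·b = c} is finite. -/
namespace PolyAux

variable {S : Type*} [MonoidWithZero S] {inv : S → S} {Λ : Set S}

def wrd (l : List S) : S := l.foldr (fun x acc => acc * x) 1

@[simp] lemma wrd_nil : wrd ([] : List S) = 1 := rfl

@[simp] lemma wrd_cons (x : S) (l : List S) : wrd (x :: l) = wrd l * x := rfl

lemma wrd_append (l₁ l₂ : List S) : wrd (l₁ ++ l₂) = wrd l₂ * wrd l₁ := by
  induction l₁ with
  | nil => simp
  | cons x l ih => simp [ih, mul_assoc]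

section
variable (hS : IsPolycyclicMonoid S inv Λ)
include hS

lemma inv_invol (a : S) : inv (inv a) = a :=
  (hS.inv_unique (inv a) a (hS.inv_inverse a).2 (hS.inv_inverse a).1).symm

lemma inv_one : inv (1 : S) = 1 := (hS.inv_unique 1 1 (by simp) (by simp)).symm

lemma inv_zero : inv (0 : S) = 0 := (hS.inv_unique 0 0 (by simp) (by simp)).symm

lemma idem_mul {e f : S} (he : e * e = e) (hf : f * f = f) :
    (e * f) * (e * f) = e * f ∧ inv (e * f) = e * f := by
  have hx1 := (hS.inv_inverse (e * f)).1
  have hx2 := (hS.inv_inverse (e * f)).2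
  set x := inv (e * f) with hxdef
  have he1 : ∀ z : S, e * (e * z) = e * z := fun z => by rw [← mul_assoc, he]
  have hf1 : ∀ z : S, f * (f * z) = f * z := fun z => by rw [← mul_assoc, hf]
  have hx1' : e * (f * (x * (e * f))) = e * f := by simpa [mul_assoc] using hx1
  have hx2' : x * (e * (f * x)) = x := by simpa [mul_assoc] using hx2
  have hx2r : ∀ z : S, x * (e * (f * (x * z))) = x * z := fun z => by
    have h := congrArg (fun w => w * z) hx2; simpa [mul_assoc] using h
  have key : f * x * e = x := by
    refine hS.inv_unique (e * f) (f * x * e) ?_ ?_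
    · simp only [mul_assoc]
      rw [hf1, he1]
      exact hx1'
    · simp only [mul_assoc]
      rw [he1, hf1, hx2r e]
  have hxidem : x * x = x := by
    have h : (f * x * e) * (f * x * e) = f * x * e := by
      simp only [mul_assoc]; rw [hx2r e]
    rwa [key] at h
  have hxinv : inv x = x :=
    (hS.inv_unique x x (by rw [hxidem, hxidem]) (by rw [hxidem, hxidem])).symm
  have hef : e * f = x := by
    have h : inv x = e * f := by rw [hxdef, inv_invol hS]
    rw [← h, hxinv]
  constructor
  · rw [hef, hxidem]
  · exact hef.symm

lemma idem_comm {e f : S} (he : e * e = e) (hf : f * f = f) : e * f = f * e := by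
  obtain ⟨hefid, hefinv⟩ := idem_mul hS he hf
  obtain ⟨hfeid, _⟩ := idem_mul hS hf he
  have he1 : ∀ z : S, e * (e * z) = e * z := fun z => by rw [← mul_assoc, he]
  have hf1 : ∀ z : S, f * (f * z) = f * z := fun z => by rw [← mul_assoc, hf]
  have hefid' : e * (f * (e * f)) = e * f := by simpa [mul_assoc] using hefid
  have hfeid' : f * (e * (f * e)) = f * e := by simpa [mul_assoc] using hfeid
  have h : f * e = inv (e * f) := by
    refine hS.inv_unique (e * f) (f * e) ?_ ?_
    · simp only [mul_assoc]
      rw [hf1, he1]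
      exact hefid'
    · simp only [mul_assoc]
      rw [he1, hf1]
      exact hfeid'
  rw [h, hefinv]

lemma inv_mul (a b : S) : inv (a * b) = inv b * inv a := by
  have ha1 := (hS.inv_inverse a).1
  have ha2 := (hS.inv_inverse a).2
  have hb1 := (hS.inv_inverse b).1
  have hb2 := (hS.inv_inverse b).2
  have hidem1 : (b * inv b) * (b * inv b) = b * inv b := by
    have h := congrArg (fun w => b * w) hb2
    simpa [mul_assoc] using h
  have hidem2 : (inv a * a) * (inv a * a) = inv a * a := by
    have h := congrArg (fun w => w * a) ha2
    simpa [mul_assoc] using h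
  have hcomm := idem_comm hS hidem1 hidem2
  have c1 : a * b * (inv b * inv a) * (a * b) = a * b := by
    have h1 : a * b * (inv b * inv a) * (a * b) = a * ((b * inv b) * (inv a * a)) * b := by
      simp [mul_assoc]
    rw [h1, hcomm]
    calc a * ((inv a * a) * (b * inv b)) * b
        = (a * inv a * a) * (b * inv b * b) := by simp [mul_assoc]
      _ = a * b := by rw [ha1, hb1]
  have c2 : (inv b * inv a) * (a * b) * (inv b * inv a) = inv b * inv a := by
    have h1 : (inv b * inv a) * (a * b) * (inv b * inv a)
        = inv b * ((inv a * a) * (b * inv b)) * inv a := by simp [mul_assoc]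
    rw [h1, ← hcomm]
    calc inv b * ((b * inv b) * (inv a * a)) * inv a
        = (inv b * b * inv b) * (inv a * a * inv a) := by simp [mul_assoc]
      _ = inv b * inv a := by rw [hb2, ha2]
  exact (hS.inv_unique (a * b) (inv b * inv a) c1 c2).symm

end
end PolyAux

-- appended content (compiled together with part1)
namespace PolyAux
variable {S : Type*} [MonoidWithZero S] {inv : S → S} {Λ : Set S}
section
variable (hS : IsPolycyclicMonoid S inv Λ)
include hS

/-- Lemma A: positive words are right invertible. -/
lemma wrd_mul_inv {l : List S} (hl : ∀ x ∈ l, x ∈ Λ) : wrd l * inv (wrd l) = 1 := by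
  induction l with
  | nil => simp [inv_one hS]
  | cons x l ih =>
    have hx : x ∈ Λ := hl x (by simp)
    have hl' : ∀ y ∈ l, y ∈ Λ := fun y hy => hl y (by simp [hy])
    calc wrd (x :: l) * inv (wrd (x :: l))
        = wrd l * (x * inv x) * inv (wrd l) := by
          rw [wrd_cons, inv_mul hS]; simp [mul_assoc]
      _ = 1 := by rw [hS.gen_unit x hx, mul_one, ih hl']

lemma wrd_ne_zero {l : List S} (hl : ∀ x ∈ l, x ∈ Λ) : wrd l ≠ 0 := by
  intro h
  have := wrd_mul_inv hS hl
  rw [h, zero_mul] at this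
  exact hS.zero_ne_one this

/-- Lemma B: trichotomy for `wrd l₁ * inv (wrd l₂)`. -/
lemma mulB : ∀ (l₁ l₂ : List S), (∀ x ∈ l₁, x ∈ Λ) → (∀ x ∈ l₂, x ∈ Λ) →
    (∃ t, l₁ = l₂ ++ t ∧ wrd l₁ * inv (wrd l₂) = wrd t) ∨
    (∃ t, l₂ = l₁ ++ t ∧ wrd l₁ * inv (wrd l₂) = inv (wrd t)) ∨
    wrd l₁ * inv (wrd l₂) = 0 := by
  intro l₁
  induction l₁ with
  | nil =>
    intro l₂ _ _
    exact Or.inr (Or.inl ⟨l₂, rfl, by simp⟩)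
  | cons x l₁ ih =>
    intro l₂ h₁ h₂
    cases l₂ with
    | nil =>
      exact Or.inl ⟨x :: l₁, rfl, by simp [inv_one hS]⟩
    | cons y l₂ =>
      have hx : x ∈ Λ := h₁ x (by simp)
      have hy : y ∈ Λ := h₂ y (by simp)
      have h₁' : ∀ z ∈ l₁, z ∈ Λ := fun z hz => h₁ z (by simp [hz])
      have h₂' : ∀ z ∈ l₂, z ∈ Λ := fun z hz => h₂ z (by simp [hz])
      have hsplit : wrd (x :: l₁) * inv (wrd (y :: l₂))
          = wrd l₁ * (x * inv y) * inv (wrd l₂) := by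
        rw [wrd_cons, wrd_cons, inv_mul hS]; simp [mul_assoc]
      by_cases hxy : x = y
      · subst hxy
        rw [hS.gen_unit x hx, mul_one] at hsplit
        rcases ih l₂ h₁' h₂' with ⟨t, hteq, htv⟩ | ⟨t, hteq, htv⟩ | h0
        · exact Or.inl ⟨t, by rw [hteq]; rfl, by rw [hsplit, htv]⟩
        · exact Or.inr (Or.inl ⟨t, by rw [hteq]; rfl, by rw [hsplit, htv]⟩)
        · exact Or.inr (Or.inr (by rw [hsplit, h0]))
      · refine Or.inr (Or.inr ?_)
        rw [hsplit, hS.gen_zero x hx y hy hxy, mul_zero, zero_mul]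

/-- no generator has a two-sided inverse. -/
lemma invxx_ne_one {x : S} (hx : x ∈ Λ) : inv x * x ≠ 1 := by
  intro h1
  by_cases hall : ∀ y ∈ Λ, y = x
  · have hmem : (0 : S) ∈ Subsemigroup.closure (Λ ∪ inv '' Λ) := by
      rw [hS.generates]; trivial
    have hP : ∃ t : S, (0 : S) * t = 1 := by
      refine Subsemigroup.closure_induction (p := fun s _ => ∃ t : S, s * t = 1 ∧ t * s = 1)
        ?_ ?_ hmem |>.imp fun t ht => ht.1
      · rintro z (hz | ⟨y, hy, rfl⟩)
        · have := hall z hz; subst this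
          exact ⟨inv z, hS.gen_unit z hz, h1⟩
        · have := hall y hy; subst this
          exact ⟨y, h1, hS.gen_unit y hy⟩
      · rintro s s' _ _ ⟨t, ht1, ht2⟩ ⟨t', ht1', ht2'⟩
        refine ⟨t' * t, ?_, ?_⟩
        · calc s * s' * (t' * t) = s * (s' * t') * t := by simp [mul_assoc]
            _ = 1 := by rw [ht1', mul_one, ht1]
        · calc t' * t * (s * s') = t' * (t * s) * s' := by simp [mul_assoc]
            _ = 1 := by rw [ht2, mul_one, ht2']
    obtain ⟨t, ht⟩ := hP
    rw [zero_mul] at ht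
    exact hS.zero_ne_one ht
  · push_neg at hall
    obtain ⟨y, hy, hyx⟩ := hall
    have h0 : x * inv y = 0 := hS.gen_zero x hx y hy (fun h => hyx h.symm)
    have hinvy : inv y = 0 := by
      calc inv y = (inv x * x) * inv y := by rw [h1, one_mul]
        _ = inv x * (x * inv y) := by rw [mul_assoc]
        _ = 0 := by rw [h0, mul_zero]
    have : (1 : S) = 0 := by rw [← hS.gen_unit y hy, hinvy, mul_zero]
    exact hS.zero_ne_one this.symm

lemma wrd_eq_one {l : List S} (hl : ∀ x ∈ l, x ∈ Λ) (h : wrd l = 1) : l = [] := by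
  cases l with
  | nil => rfl
  | cons x l =>
    exfalso
    have hx : x ∈ Λ := hl x (by simp)
    rw [wrd_cons] at h
    have h2 : wrd l = inv x := by
      calc wrd l = wrd l * (x * inv x) := by rw [hS.gen_unit x hx, mul_one]
        _ = (wrd l * x) * inv x := by rw [mul_assoc]
        _ = inv x := by rw [h, one_mul]
    have : inv x * x = 1 := by rw [← h2, h]
    exact invxx_ne_one hS hx this

/-- Lemma C: positive words are uniquely represented. -/
lemma wrd_inj {l l' : List S} (hl : ∀ x ∈ l, x ∈ Λ) (hl' : ∀ x ∈ l', x ∈ Λ)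
    (h : wrd l = wrd l') : l = l' := by
  have h1 : wrd l' * inv (wrd l) = 1 := by
    rw [h]; exact wrd_mul_inv hS hl'
  rcases mulB hS l' l hl' hl with ⟨t, hteq, htv⟩ | ⟨t, hteq, htv⟩ | h0
  · have ht : ∀ x ∈ t, x ∈ Λ := fun x hx => hl' x (by simp [hteq, hx])
    have : t = [] := wrd_eq_one hS ht (by rw [← htv, h1])
    rw [hteq, this, List.append_nil]
  · have ht : ∀ x ∈ t, x ∈ Λ := fun x hx => hl x (by simp [hteq, hx])
    have hwt : wrd t = 1 := by
      have : inv (wrd t) = 1 := by rw [← htv, h1]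
      calc wrd t = inv (inv (wrd t)) := (inv_invol hS _).symm
        _ = 1 := by rw [this, inv_one hS]
    have : t = [] := wrd_eq_one hS ht hwt
    rw [hteq, this, List.append_nil]
  · rw [h1] at h0
    exact absurd h0.symm hS.zero_ne_one

/-- Lemma D -/
lemma invw_w_eq_one {l : List S} (hl : ∀ x ∈ l, x ∈ Λ)
    (h : inv (wrd l) * wrd l = 1) : l = [] := by
  cases l with
  | nil => rfl
  | cons x l =>
    exfalso
    have hx : x ∈ Λ := hl x (by simp)
    rw [wrd_cons, inv_mul hS] at h
    -- h : (inv x * inv (wrd l)) * (wrd l * x) = 1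
    have h' : inv x * ((inv (wrd l) * wrd l) * x) = 1 := by
      rw [← h]; simp [mul_assoc]
    have hx1 : x = (inv (wrd l) * wrd l) * x := by
      calc x = x * (inv x * ((inv (wrd l) * wrd l) * x)) := by rw [h', mul_one]
        _ = (x * inv x) * ((inv (wrd l) * wrd l) * x) := by rw [← mul_assoc]
        _ = (inv (wrd l) * wrd l) * x := by rw [hS.gen_unit x hx, one_mul]
    have hG1 : inv (wrd l) * wrd l = 1 := by
      calc inv (wrd l) * wrd l
          = (inv (wrd l) * wrd l) * (x * inv x) := by rw [hS.gen_unit x hx, mul_one]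
        _ = ((inv (wrd l) * wrd l) * x) * inv x := by rw [← mul_assoc]
        _ = x * inv x := by rw [← hx1]
        _ = 1 := hS.gen_unit x hx
    have : inv x * x = 1 := by
      rw [hG1, one_mul] at h'
      exact h'
    exact invxx_ne_one hS hx this

end
end PolyAux

namespace PolyAux
variable {S : Type*} [MonoidWithZero S] {inv : S → S} {Λ : Set S}
section
variable (hS : IsPolycyclicMonoid S inv Λ)
include hS

lemma nf_aux {v u v' u' t : List S}
    (hvΛ : ∀ x ∈ v, x ∈ Λ) (huΛ : ∀ x ∈ u, x ∈ Λ)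
    (hv'Λ : ∀ x ∈ v', x ∈ Λ) (hu'Λ : ∀ x ∈ u', x ∈ Λ)
    (heq : inv (wrd v) * wrd u = inv (wrd v') * wrd u')
    (hv : v = v' ++ t) : v = v' ∧ u = u' := by
  have htΛ : ∀ x ∈ t, x ∈ Λ := fun x hx => hvΛ x (by simp [hv, hx])
  have hwv : wrd v = wrd t * wrd v' := by rw [hv, wrd_append]
  have h1 : wrd v * inv (wrd v') = wrd t := by
    rw [hwv, mul_assoc, wrd_mul_inv hS hv'Λ, mul_one]
  have h2 : wrd u = wrd t * wrd u' := by
    calc wrd u = (wrd v * inv (wrd v)) * wrd u := by rw [wrd_mul_inv hS hvΛ, one_mul]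
      _ = wrd v * (inv (wrd v) * wrd u) := mul_assoc _ _ _
      _ = wrd v * (inv (wrd v') * wrd u') := by rw [heq]
      _ = (wrd v * inv (wrd v')) * wrd u' := (mul_assoc _ _ _).symm
      _ = wrd t * wrd u' := by rw [h1]
  have hu : u = u' ++ t := by
    refine wrd_inj hS huΛ (fun x hx => ?_) (by rw [h2, wrd_append])
    rcases List.mem_append.1 hx with hx | hx
    · exact hu'Λ x hx
    · exact htΛ x hx
  have hv'invv : wrd v' * inv (wrd v) = inv (wrd t) := by
    rw [hwv, inv_mul hS, ← mul_assoc, wrd_mul_inv hS hv'Λ, one_mul]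
  have h3 : inv (wrd t) * wrd u = wrd u' := by
    calc inv (wrd t) * wrd u = (wrd v' * inv (wrd v)) * wrd u := by rw [hv'invv]
      _ = wrd v' * (inv (wrd v) * wrd u) := mul_assoc _ _ _
      _ = wrd v' * (inv (wrd v') * wrd u') := by rw [heq]
      _ = (wrd v' * inv (wrd v')) * wrd u' := (mul_assoc _ _ _).symm
      _ = wrd u' := by rw [wrd_mul_inv hS hv'Λ, one_mul]
  have h5 : (inv (wrd t) * wrd t) * (wrd u' * inv (wrd u')) = wrd u' * inv (wrd u') := by
    calc (inv (wrd t) * wrd t) * (wrd u' * inv (wrd u'))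
        = (inv (wrd t) * (wrd t * wrd u')) * inv (wrd u') := by simp [mul_assoc]
      _ = (inv (wrd t) * wrd u) * inv (wrd u') := by rw [← h2]
      _ = wrd u' * inv (wrd u') := by rw [h3]
  rw [wrd_mul_inv hS hu'Λ, mul_one] at h5
  have ht : t = [] := invw_w_eq_one hS htΛ h5
  exact ⟨by rw [hv, ht, List.append_nil], by rw [hu, ht, List.append_nil]⟩

/-- Lemma E: normal forms are unique. -/
lemma nf_inj {v u v' u' : List S}
    (hvΛ : ∀ x ∈ v, x ∈ Λ) (huΛ : ∀ x ∈ u, x ∈ Λ)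
    (hv'Λ : ∀ x ∈ v', x ∈ Λ) (hu'Λ : ∀ x ∈ u', x ∈ Λ)
    (heq : inv (wrd v) * wrd u = inv (wrd v') * wrd u') : v = v' ∧ u = u' := by
  rcases mulB hS v v' hvΛ hv'Λ with ⟨t, hteq, _⟩ | ⟨t, hteq, _⟩ | h0
  · exact nf_aux hS hvΛ huΛ hv'Λ hu'Λ heq hteq
  · have h := nf_aux hS hv'Λ hu'Λ hvΛ huΛ heq.symm hteq
    exact ⟨h.1.symm, h.2.symm⟩
  · exfalso
    have : wrd u = 0 := by
      calc wrd u = (wrd v * inv (wrd v)) * wrd u := by rw [wrd_mul_inv hS hvΛ, one_mul]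
        _ = wrd v * (inv (wrd v) * wrd u) := mul_assoc _ _ _
        _ = wrd v * (inv (wrd v') * wrd u') := by rw [heq]
        _ = (wrd v * inv (wrd v')) * wrd u' := (mul_assoc _ _ _).symm
        _ = 0 := by rw [h0, zero_mul]
    exact wrd_ne_zero hS huΛ this

/-- Representation: every element is `0` or a normal form. -/
lemma rep (s : S) :
    s = 0 ∨ ∃ v u, (∀ x ∈ v, x ∈ Λ) ∧ (∀ x ∈ u, x ∈ Λ) ∧ s = inv (wrd v) * wrd u := by
  have hmem : s ∈ Subsemigroup.closure (Λ ∪ inv '' Λ) := by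
    rw [hS.generates]; trivial
  refine Subsemigroup.closure_induction
    (p := fun z _ => z = 0 ∨ ∃ v u, (∀ x ∈ v, x ∈ Λ) ∧ (∀ x ∈ u, x ∈ Λ) ∧
      z = inv (wrd v) * wrd u) ?_ ?_ hmem
  · rintro z (hz | ⟨y, hy, rfl⟩)
    · refine Or.inr ⟨[], [z], by simp, ?_, by simp [inv_one hS]⟩
      intro x hx; rw [List.mem_singleton] at hx; subst hx; exact hz
    · refine Or.inr ⟨[y], [], ?_, by simp, by simp⟩
      intro x hx; rw [List.mem_singleton] at hx; subst hx; exact hy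
  · rintro s₁ s₂ _ _ (rfl | ⟨v₁, u₁, hv₁, hu₁, rfl⟩) h₂
    · left; rw [zero_mul]
    rcases h₂ with rfl | ⟨v₂, u₂, hv₂, hu₂, rfl⟩
    · left; rw [mul_zero]
    have hbase : (inv (wrd v₁) * wrd u₁) * (inv (wrd v₂) * wrd u₂)
        = inv (wrd v₁) * ((wrd u₁ * inv (wrd v₂)) * wrd u₂) := by simp [mul_assoc]
    rcases mulB hS u₁ v₂ hu₁ hv₂ with ⟨t, hteq, htv⟩ | ⟨t, hteq, htv⟩ | h0
    · have htΛ : ∀ x ∈ t, x ∈ Λ := fun x hx => hu₁ x (by simp [hteq, hx])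
      refine Or.inr ⟨v₁, u₂ ++ t, hv₁, ?_, ?_⟩
      · intro x hx
        rcases List.mem_append.1 hx with hx | hx
        · exact hu₂ x hx
        · exact htΛ x hx
      · rw [hbase, htv, ← wrd_append]
    · have htΛ : ∀ x ∈ t, x ∈ Λ := fun x hx => hv₂ x (by simp [hteq, hx])
      refine Or.inr ⟨v₁ ++ t, u₂, ?_, hu₂, ?_⟩
      · intro x hx
        rcases List.mem_append.1 hx with hx | hx
        · exact hv₁ x hx
        · exact htΛ x hx
      · rw [hbase, htv, ← mul_assoc, ← inv_mul hS, ← wrd_append]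
    · left
      rw [hbase, h0, zero_mul, mul_zero]

end
end PolyAux

open PolyAux in
/-- In a polycyclic monoid, for non-zero a, b, c the set
{x : a·x·b = c} is finite. -/
theorem stmt3 {S : Type*} [MonoidWithZero S] (inv : S → S) (Λ : Set S)
    (hS : IsPolycyclicMonoid S inv Λ)
    (a b c : S) (ha : a ≠ 0) (hb : b ≠ 0) (hc : c ≠ 0) :
    {x : S | a * x * b = c}.Finite := by
  classical
  rcases Set.eq_empty_or_nonempty {x : S | a * x * b = c} with hemp | ⟨x₀, hx₀⟩
  · rw [hemp]; exact Set.finite_empty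
  simp only [Set.mem_setOf_eq] at hx₀
  obtain (ha0 | ⟨va, ua, hvaΛ, huaΛ, hae⟩) := rep hS a
  · exact absurd ha0 ha
  obtain (hb0 | ⟨vb, ub, hvbΛ, hubΛ, hbe⟩) := rep hS b
  · exact absurd hb0 hb
  set e := inv a * a with he
  set f := b * inv b with hf
  set d := inv a * c * inv b with hd
  -- helper identities
  have haa : ∀ z : S, a * (inv a * (a * z)) = a * z := fun z => by
    have h := congrArg (fun w => w * z) (hS.inv_inverse a).1
    simpa [mul_assoc] using h
  have hbb : b * (inv b * b) = b := by
    simpa [mul_assoc] using (hS.inv_inverse b).1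
  have hexf : ∀ y : S, a * (e * y * f) * b = a * y * b := by
    intro y
    rw [he, hf]
    simp only [mul_assoc]
    rw [haa, hbb]
  have hfor : ∀ y : S, a * y * b = c → e * y * f = d := by
    intro y hy
    rw [he, hf, hd]
    calc (inv a * a) * y * (b * inv b) = inv a * (a * y * b) * inv b := by
          simp [mul_assoc]
      _ = inv a * c * inv b := by rw [hy]
  have hd0 : d ≠ 0 := by
    intro h0
    apply hc
    calc c = a * x₀ * b := hx₀.symm
      _ = a * (e * x₀ * f) * b := (hexf x₀).symm
      _ = a * d * b := by rw [hfor x₀ hx₀]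
      _ = 0 := by rw [h0, mul_zero, zero_mul]
  obtain (hd0' | ⟨vd, ud, hvdΛ, hudΛ, hde⟩) := rep hS d
  · exact absurd hd0' hd0
  -- normal forms of e and f
  have hia : inv a = inv (wrd ua) * wrd va := by
    rw [hae, inv_mul hS, inv_invol hS]
  have heform : e = inv (wrd ua) * wrd ua := by
    rw [he, hia, hae]
    calc (inv (wrd ua) * wrd va) * (inv (wrd va) * wrd ua)
        = inv (wrd ua) * ((wrd va * inv (wrd va)) * wrd ua) := by simp [mul_assoc]
      _ = inv (wrd ua) * wrd ua := by rw [wrd_mul_inv hS hvaΛ, one_mul]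
  have hib : inv b = inv (wrd ub) * wrd vb := by
    rw [hbe, inv_mul hS, inv_invol hS]
  have hfform : f = inv (wrd vb) * wrd vb := by
    rw [hf, hib, hbe]
    calc (inv (wrd vb) * wrd ub) * (inv (wrd ub) * wrd vb)
        = inv (wrd vb) * ((wrd ub * inv (wrd ub)) * wrd vb) := by simp [mul_assoc]
      _ = inv (wrd vb) * wrd vb := by rw [wrd_mul_inv hS hubΛ, one_mul]
  -- the finite superset
  have hfinV : ({l : List S | l <+: ua} ∪ {l : List S | l <+: vd}).Finite := by
    apply Set.Finite.union
    · have hEq : {l : List S | l <+: ua} = {l : List S | l ∈ ua.inits} := by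
        ext l; simp [List.mem_inits]
      rw [hEq]; exact ua.inits.finite_toSet
    · have hEq : {l : List S | l <+: vd} = {l : List S | l ∈ vd.inits} := by
        ext l; simp [List.mem_inits]
      rw [hEq]; exact vd.inits.finite_toSet
  have hfinU : {l : List S | l <+: ud}.Finite := by
    have hEq : {l : List S | l <+: ud} = {l : List S | l ∈ ud.inits} := by
      ext l; simp [List.mem_inits]
    rw [hEq]; exact ud.inits.finite_toSet
  refine Set.Finite.subset
    (Set.Finite.image (fun pr : List S × List S => inv (wrd pr.1) * wrd pr.2)
      (hfinV.prod hfinU)) ?_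
  intro x hx
  simp only [Set.mem_setOf_eq] at hx
  have hexd : e * x * f = d := hfor x hx
  have hxne : x ≠ 0 := by
    rintro rfl
    apply hc
    rw [← hx, mul_zero, zero_mul]
  obtain (h0 | ⟨v, u, hvΛ, huΛ, hxe⟩) := rep hS x
  · exact absurd h0 hxne
  -- stage 1 : compute e * x
  have stage1 : ∃ V₁ U₁ : List S, (∀ z ∈ V₁, z ∈ Λ) ∧ (∀ z ∈ U₁, z ∈ Λ) ∧
      (e * x = inv (wrd V₁) * wrd U₁) ∧ ((v <+: ua) ∨ v = V₁) ∧ u <+: U₁ := by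
    have hbase : e * x = inv (wrd ua) * ((wrd ua * inv (wrd v)) * wrd u) := by
      rw [heform, hxe]; simp [mul_assoc]
    rcases mulB hS ua v huaΛ hvΛ with ⟨t₁, ht₁eq, ht₁v⟩ | ⟨t₁, ht₁eq, ht₁v⟩ | h0
    · -- ua = v ++ t₁
      have ht₁Λ : ∀ z ∈ t₁, z ∈ Λ := fun z hz => huaΛ z (by simp [ht₁eq, hz])
      refine ⟨ua, u ++ t₁, huaΛ, ?_, ?_, Or.inl ⟨t₁, ht₁eq.symm⟩, List.prefix_append u t₁⟩
      · intro z hz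
        rcases List.mem_append.1 hz with hz | hz
        · exact huΛ z hz
        · exact ht₁Λ z hz
      · rw [hbase, ht₁v, ← wrd_append]
    · -- v = ua ++ t₁
      refine ⟨v, u, hvΛ, huΛ, ?_, Or.inr rfl, List.prefix_refl u⟩
      rw [hbase, ht₁v, ← mul_assoc, ← inv_mul hS, ← wrd_append, ← ht₁eq]
    · exfalso
      apply hd0
      rw [← hexd, hbase, h0, zero_mul, mul_zero, zero_mul]
  obtain ⟨V₁, U₁, hV₁Λ, hU₁Λ, hex, hPA, hPB⟩ := stage1
  rw [hex] at hexd
  -- stage 2 : compute (e*x) * f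
  have hbase2 : inv (wrd V₁) * wrd U₁ * f
      = inv (wrd V₁) * ((wrd U₁ * inv (wrd vb)) * wrd vb) := by
    rw [hfform]; simp [mul_assoc]
  rcases mulB hS U₁ vb hU₁Λ hvbΛ with ⟨s, hseq, hsv⟩ | ⟨s, hseq, hsv⟩ | h0
  · -- U₁ = vb ++ s : d = inv (wrd V₁) * wrd U₁
    have hd3 : inv (wrd V₁) * wrd U₁ = inv (wrd vd) * wrd ud := by
      rw [← hde, ← hexd, hbase2, hsv, hseq, wrd_append]
    obtain ⟨hVd, hUd⟩ := nf_inj hS hV₁Λ hU₁Λ hvdΛ hudΛ hd3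
    refine ⟨(v, u), ⟨?_, ?_⟩, hxe.symm⟩
    · rcases hPA with hpre | rfl
      · exact Or.inl hpre
      · exact Or.inr (hVd ▸ List.prefix_refl _)
    · exact hUd ▸ hPB
  · -- vb = U₁ ++ s : d = inv (wrd (V₁ ++ s)) * wrd vb
    have hsΛ : ∀ z ∈ s, z ∈ Λ := fun z hz => hvbΛ z (by simp [hseq, hz])
    have hVsΛ : ∀ z ∈ V₁ ++ s, z ∈ Λ := by
      intro z hz
      rcases List.mem_append.1 hz with hz | hz
      · exact hV₁Λ z hz
      · exact hsΛ z hz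
    have hd3 : inv (wrd (V₁ ++ s)) * wrd vb = inv (wrd vd) * wrd ud := by
      rw [← hde, ← hexd, hbase2, hsv, wrd_append, inv_mul hS]
      simp [mul_assoc]
    obtain ⟨hVd, hUd⟩ := nf_inj hS hVsΛ hvbΛ hvdΛ hudΛ hd3
    refine ⟨(v, u), ⟨?_, ?_⟩, hxe.symm⟩
    · rcases hPA with hpre | rfl
      · exact Or.inl hpre
      · exact Or.inr (hVd ▸ List.prefix_append v s)
    · exact hUd ▸ hPB.trans ⟨s, hseq.symm⟩
  · exfalso
    apply hd0
    rw [← hexd, hbase2, h0, zero_mul, mul_zero]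
end

section
/- Let S be a polycyclic monoid endowed with a Hausdorff locally compact topology for which multiplication is separately continuous. Then every non-zero element of S is an isolated point of the space S. -/
section PolyAux

variable {S : Type*} [MonoidWithZero S]

/-- Product of a word. -/
def wpr (l : List S) : S := l.prod

/-- Product of the reversed word with `inv` applied entrywise. -/
def wiv (inv : S → S) (l : List S) : S := (l.reverse.map inv).prod

@[simp] lemma wpr_nil : wpr ([] : List S) = 1 := rfl

@[simp] lemma wpr_cons (a : S) (l : List S) : wpr (a :: l) = a * wpr l :=
  List.prod_cons

@[simp] lemma wpr_append (l l' : List S) : wpr (l ++ l') = wpr l * wpr l' :=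
  List.prod_append

@[simp] lemma wpr_singleton (a : S) : wpr [a] = a := by simp [wpr]

variable (inv : S → S)

@[simp] lemma wiv_nil : wiv inv ([] : List S) = 1 := rfl

@[simp] lemma wiv_singleton (a : S) : wiv inv [a] = inv a := by simp [wiv]

@[simp] lemma wiv_append (l l' : List S) :
    wiv inv (l ++ l') = wiv inv l' * wiv inv l := by
  simp [wiv]

variable {Λ : Set S} (hS : IsPolycyclicMonoid S inv Λ)

include hS

lemma poly_wpr_wiv : ∀ l : List S, (∀ z ∈ l, z ∈ Λ) → wpr l * wiv inv l = 1
  | [], _ => by simp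
  | a :: l, h => by
    have ih := poly_wpr_wiv l (fun z hz => h z (List.mem_cons_of_mem _ hz))
    have h1 : wiv inv (a :: l) = wiv inv l * inv a := by
      have : a :: l = [a] ++ l := rfl
      rw [this, wiv_append, wiv_singleton]
    rw [wpr_cons, h1]
    calc a * wpr l * (wiv inv l * inv a)
        = a * (wpr l * wiv inv l) * inv a := by simp [mul_assoc]
      _ = a * inv a := by rw [ih, mul_one]
      _ = 1 := hS.gen_unit a (h a (List.mem_cons_self))

lemma poly_R0 (q p : List S) (hq : ∀ z ∈ q, z ∈ Λ) (hp : ∀ z ∈ p, z ∈ Λ) :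
    wiv inv q * wpr p ≠ 0 := by
  intro h0
  have h1 : wpr q * (wiv inv q * wpr p) * wiv inv p
      = (wpr q * wiv inv q) * (wpr p * wiv inv p) := by simp [mul_assoc]
  rw [h0, mul_zero, zero_mul, poly_wpr_wiv inv hS q hq, poly_wpr_wiv inv hS p hp,
    one_mul] at h1
  exact hS.zero_ne_one h1

/-- The cancellation lemma: `wpr p * wiv t` is `wpr r`, `wiv r` or `0`. -/
lemma poly_CL : ∀ t p : List S, (∀ z ∈ p, z ∈ Λ) → (∀ z ∈ t, z ∈ Λ) →
    (∃ r, p = r ++ t ∧ wpr p * wiv inv t = wpr r) ∨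
    (∃ r, t = r ++ p ∧ wpr p * wiv inv t = wiv inv r) ∨
    ((∃ x ∈ Λ, ∃ y ∈ Λ, x ≠ y) ∧ wpr p * wiv inv t = 0) := by
  intro t
  induction t using List.reverseRecOn with
  | nil =>
    intro p hp _
    exact Or.inl ⟨p, by simp, by simp⟩
  | append_singleton t' b ih =>
    intro p hp ht
    have hb : b ∈ Λ := ht b (by simp)
    have ht' : ∀ z ∈ t', z ∈ Λ := fun z hz => ht z (by simp [hz])
    rcases p.eq_nil_or_concat' with rfl | ⟨p', a, rfl⟩
    · refine Or.inr (Or.inl ⟨t' ++ [b], by simp, by simp⟩)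
    · have ha : a ∈ Λ := hp a (by simp)
      have hp' : ∀ z ∈ p', z ∈ Λ := fun z hz => hp z (by simp [hz])
      have key : wpr (p' ++ [a]) * wiv inv (t' ++ [b])
          = wpr p' * ((a * inv b) * wiv inv t') := by
        simp [mul_assoc]
      by_cases hab : a = b
      · subst hab
        rw [hS.gen_unit a ha, one_mul] at key
        rcases ih p' hp' ht' with ⟨r, hr, hv⟩ | ⟨r, hr, hv⟩ | ⟨hw, hv⟩
        · exact Or.inl ⟨r, by rw [hr, List.append_assoc], by rw [key, hv]⟩
        · exact Or.inr (Or.inl ⟨r, by rw [hr, List.append_assoc], by rw [key, hv]⟩)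
        · exact Or.inr (Or.inr ⟨hw, by rw [key, hv]⟩)
      · rw [hS.gen_zero a ha b hb hab, zero_mul, mul_zero] at key
        exact Or.inr (Or.inr ⟨⟨a, ha, b, hb, hab⟩, key⟩)

/-- Normal form / degeneracy dichotomy for every element of `S`. -/
lemma poly_main (s : S) :
    (s = 0 ∧ ∃ x ∈ Λ, ∃ y ∈ Λ, x ≠ y) ∨
    ∃ q p : List S, (∀ z ∈ q, z ∈ Λ) ∧ (∀ z ∈ p, z ∈ Λ) ∧ s = wiv inv q * wpr p := by
  have hs : s ∈ Subsemigroup.closure (Λ ∪ inv '' Λ) := by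
    rw [hS.generates]; trivial
  refine Subsemigroup.closure_induction
    (p := fun x _ => (x = 0 ∧ ∃ x ∈ Λ, ∃ y ∈ Λ, x ≠ y) ∨
      ∃ q p : List S, (∀ z ∈ q, z ∈ Λ) ∧ (∀ z ∈ p, z ∈ Λ) ∧ x = wiv inv q * wpr p)
    ?_ ?_ hs
  · rintro g (hg | ⟨y, hy, rfl⟩)
    · exact Or.inr ⟨[], [g], by simp, by simpa using hg, by simp⟩
    · exact Or.inr ⟨[y], [], by simpa using hy, by simp, by simp⟩
  · rintro u v _ _ (⟨rfl, hw⟩ | ⟨q, p, hq, hp, rfl⟩) hv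
    · exact Or.inl ⟨zero_mul v, hw⟩
    rcases hv with ⟨rfl, hw⟩ | ⟨t, s', ht, hs', rfl⟩
    · exact Or.inl ⟨mul_zero _, hw⟩
    have assoc : (wiv inv q * wpr p) * (wiv inv t * wpr s')
        = wiv inv q * ((wpr p * wiv inv t) * wpr s') := by simp [mul_assoc]
    rcases poly_CL inv hS t p hp ht with ⟨r, hr, hv⟩ | ⟨r, hr, hv⟩ | ⟨hw, hv⟩
    · refine Or.inr ⟨q, r ++ s', hq, ?_, ?_⟩
      · intro z hz
        rcases List.mem_append.1 hz with hz | hz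
        · exact hp z (hr ▸ List.mem_append.2 (Or.inl hz))
        · exact hs' z hz
      · rw [assoc, hv, wpr_append]
    · refine Or.inr ⟨r ++ q, s', ?_, hs', ?_⟩
      · intro z hz
        rcases List.mem_append.1 hz with hz | hz
        · exact ht z (hr ▸ List.mem_append.2 (Or.inl hz))
        · exact hq z hz
      · rw [assoc, hv, wiv_append, mul_assoc]
    · exact Or.inl ⟨by rw [assoc, hv, zero_mul, mul_zero], hw⟩

/-- `Λ` contains two distinct elements. -/
lemma poly_two : ∃ x ∈ Λ, ∃ y ∈ Λ, x ≠ y := by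
  rcases poly_main inv hS 0 with ⟨_, h⟩ | ⟨q, p, hq, hp, h0⟩
  · exact h
  · exact absurd h0.symm (poly_R0 inv hS q p hq hp)

/-- No generator is a unit. -/
lemma poly_unit (x : S) (hx : x ∈ Λ) : inv x * x ≠ 1 := by
  intro h1
  obtain ⟨a, ha, b, hb, hab⟩ := poly_two inv hS
  obtain ⟨y, hy, hyx⟩ : ∃ y ∈ Λ, y ≠ x := by
    by_cases hax : a = x
    · exact ⟨b, hb, fun h => hab (hax ▸ h ▸ rfl)⟩
    · exact ⟨a, ha, hax⟩
  have h2 : inv y = (0 : S) := by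
    have : inv x * (x * inv y) = inv y := by
      rw [← mul_assoc, h1, one_mul]
    rw [hS.gen_zero x hx y hy (fun h => hyx h.symm), mul_zero] at this
    exact this.symm
  have h3 : (1 : S) = 0 := by
    rw [← hS.gen_unit y hy, h2, mul_zero]
  exact hS.zero_ne_one h3.symm

lemma poly_R3' (u : List S) (hu : ∀ z ∈ u, z ∈ Λ)
    (h : wiv inv u * wpr u = 1) : u = [] := by
  cases u with
  | nil => rfl
  | cons x v =>
    exfalso
    have hx : x ∈ Λ := hu x (List.mem_cons_self)
    have hv : ∀ z ∈ v, z ∈ Λ := fun z hz => hu z (List.mem_cons_of_mem _ hz)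
    have hvv : wpr v * wiv inv v = 1 := poly_wpr_wiv inv hS v hv
    have hcons : wiv inv (x :: v) = wiv inv v * inv x := by
      have : x :: v = [x] ++ v := rfl
      rw [this, wiv_append, wiv_singleton]
    have hc : (wiv inv v * inv x * x) * wpr v = 1 := by
      rw [← h, hcons, wpr_cons]; simp [mul_assoc]
    have hceq : wiv inv v * inv x * x = wiv inv v := by
      calc wiv inv v * inv x * x
          = (wiv inv v * inv x * x) * (wpr v * wiv inv v) := by rw [hvv, mul_one]
        _ = ((wiv inv v * inv x * x) * wpr v) * wiv inv v := by simp [mul_assoc]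
        _ = wiv inv v := by rw [hc, one_mul]
    have h4 : inv x * x = 1 := by
      calc inv x * x = (wpr v * wiv inv v) * (inv x * x) := by rw [hvv, one_mul]
        _ = wpr v * (wiv inv v * inv x * x) := by simp [mul_assoc]
        _ = wpr v * wiv inv v := by rw [hceq]
        _ = 1 := hvv
    exact poly_unit inv hS x hx h4

lemma poly_R3 (u v : List S) (hu : ∀ z ∈ u, z ∈ Λ) (hv : ∀ z ∈ v, z ∈ Λ)
    (h : wiv inv u * wpr v = 1) : u = [] ∧ v = [] := by
  have huu : wpr u * wiv inv u = 1 := poly_wpr_wiv inv hS u hu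
  have hvv : wpr v * wiv inv v = 1 := poly_wpr_wiv inv hS v hv
  have hstar : wpr u * wiv inv v = 1 := by
    calc wpr u * wiv inv v = wpr u * (wiv inv u * wpr v) * wiv inv v := by
          rw [h, mul_one]
      _ = (wpr u * wiv inv u) * (wpr v * wiv inv v) := by simp [mul_assoc]
      _ = 1 := by rw [huu, hvv, one_mul]
  have heuv : (wiv inv u * wpr u) * (wiv inv v * wpr v) = 1 := by
    calc (wiv inv u * wpr u) * (wiv inv v * wpr v)
        = wiv inv u * ((wpr u * wiv inv v) * wpr v) := by simp [mul_assoc]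
      _ = wiv inv u * wpr v := by rw [hstar, one_mul]
      _ = 1 := h
  have hidu : (wiv inv u * wpr u) * (wiv inv u * wpr u) = wiv inv u * wpr u := by
    calc (wiv inv u * wpr u) * (wiv inv u * wpr u)
        = wiv inv u * ((wpr u * wiv inv u) * wpr u) := by simp [mul_assoc]
      _ = wiv inv u * wpr u := by rw [huu, one_mul]
  have hidv : (wiv inv v * wpr v) * (wiv inv v * wpr v) = wiv inv v * wpr v := by
    calc (wiv inv v * wpr v) * (wiv inv v * wpr v)
        = wiv inv v * ((wpr v * wiv inv v) * wpr v) := by simp [mul_assoc]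
      _ = wiv inv v * wpr v := by rw [hvv, one_mul]
  have heu1 : wiv inv u * wpr u = 1 := by
    calc wiv inv u * wpr u
        = (wiv inv u * wpr u) * ((wiv inv u * wpr u) * (wiv inv v * wpr v)) := by
          rw [heuv, mul_one]
      _ = ((wiv inv u * wpr u) * (wiv inv u * wpr u)) * (wiv inv v * wpr v) :=
          (mul_assoc _ _ _).symm
      _ = (wiv inv u * wpr u) * (wiv inv v * wpr v) := by rw [hidu]
      _ = 1 := heuv
  have hev1 : wiv inv v * wpr v = 1 := by
    calc wiv inv v * wpr v
        = ((wiv inv u * wpr u) * (wiv inv v * wpr v)) * (wiv inv v * wpr v) := by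
          rw [heuv, one_mul]
      _ = (wiv inv u * wpr u) * ((wiv inv v * wpr v) * (wiv inv v * wpr v)) :=
          mul_assoc _ _ _
      _ = (wiv inv u * wpr u) * (wiv inv v * wpr v) := by rw [hidv]
      _ = 1 := heuv
  exact ⟨poly_R3' inv hS u hu heu1, poly_R3' inv hS v hv hev1⟩

lemma poly_R1 (u : List S) (hu : ∀ z ∈ u, z ∈ Λ) (h : wpr u = 1) : u = [] :=
  (poly_R3 inv hS [] u (by simp) hu (by simpa using h)).2

lemma poly_R2 (u : List S) (hu : ∀ z ∈ u, z ∈ Λ) (h : wiv inv u = 1) : u = [] :=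
  (poly_R3 inv hS u [] hu (by simp) (by simpa using h)).1

/-- `wpr u * wiv v = 1` forces `u = v`. -/
lemma poly_R4 (u v : List S) (hu : ∀ z ∈ u, z ∈ Λ) (hv : ∀ z ∈ v, z ∈ Λ)
    (h : wpr u * wiv inv v = 1) : u = v := by
  rcases poly_CL inv hS v u hu hv with ⟨r, hr, hval⟩ | ⟨r, hr, hval⟩ | ⟨_, hval⟩
  · have hrΛ : ∀ z ∈ r, z ∈ Λ := fun z hz => hu z (hr ▸ List.mem_append.2 (Or.inl hz))
    have : r = [] := poly_R1 inv hS r hrΛ (hval.symm.trans h)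
    rw [hr, this, List.nil_append]
  · have hrΛ : ∀ z ∈ r, z ∈ Λ := fun z hz => hv z (hr ▸ List.mem_append.2 (Or.inl hz))
    have : r = [] := poly_R2 inv hS r hrΛ (hval.symm.trans h)
    rw [hr, this, List.nil_append]
  · exact absurd (hval.symm.trans h) hS.zero_ne_one

end PolyAux

/-- In a Hausdorff locally compact semitopological polycyclic monoid,
every non-zero element is an isolated point. -/
theorem stmt4 {S : Type*} [MonoidWithZero S] (inv : S → S) (Λ : Set S)
    (hS : IsPolycyclicMonoid S inv Λ)
    [TopologicalSpace S] [T2Space S] [LocallyCompactSpace S]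
    (hl : ∀ a : S, Continuous (fun x : S => a * x))
    (hr : ∀ a : S, Continuous (fun x : S => x * a)) :
    ∀ a : S, a ≠ 0 → IsOpen ({a} : Set S) := by
  obtain ⟨x, hx, y, hy, hxy⟩ := poly_two inv hS
  -- Step 1: `{1}` is open.
  have hone : IsOpen ({1} : Set S) := by
    set W : Set S := ((fun a : S => x * a * inv x) ⁻¹' {0}ᶜ) ∩
        ((fun a : S => y * a * inv y) ⁻¹' {0}ᶜ) with hW
    have hcx : Continuous fun a : S => x * a * inv x := (hr (inv x)).comp (hl x)
    have hcy : Continuous fun a : S => y * a * inv y := (hr (inv y)).comp (hl y)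
    have hWopen : IsOpen W :=
      (isOpen_compl_singleton.preimage hcx).inter (isOpen_compl_singleton.preimage hcy)
    have h1W : (1 : S) ∈ W := by
      constructor
      · simp only [Set.mem_preimage, mul_one, Set.mem_compl_iff, Set.mem_singleton_iff]
        rw [hS.gen_unit x hx]
        exact Ne.symm hS.zero_ne_one
      · simp only [Set.mem_preimage, mul_one, Set.mem_compl_iff, Set.mem_singleton_iff]
        rw [hS.gen_unit y hy]
        exact Ne.symm hS.zero_ne_one
    have hWsub : W ⊆ {1} := by
      rintro a ⟨h1, h2⟩
      simp only [Set.mem_preimage, Set.mem_compl_iff, Set.mem_singleton_iff] at h1 h2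
      have ha0 : a ≠ 0 := by
        rintro rfl
        exact h1 (by rw [mul_zero, zero_mul])
      rcases poly_main inv hS a with ⟨ha, _⟩ | ⟨q, p, hq, hp, rfl⟩
      · exact absurd ha ha0
      have hqnil : q = [] := by
        rcases q.eq_nil_or_concat' with rfl | ⟨q', z, rfl⟩
        · rfl
        exfalso
        have hz : z ∈ Λ := hq z (by simp)
        have comp : ∀ w : S, w ∈ Λ →
            w * (wiv inv (q' ++ [z]) * wpr p) * inv w
              = (w * inv z) * (wiv inv q' * (wpr p * inv w)) := by
          intro w _
          rw [wiv_append, wiv_singleton]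
          simp [mul_assoc]
        have ex : z = x := by
          by_contra hne
          exact h1 (by rw [comp x hx, hS.gen_zero x hx z hz (fun h => hne h.symm), zero_mul])
        have ey : z = y := by
          by_contra hne
          exact h2 (by rw [comp y hy, hS.gen_zero y hy z hz (fun h => hne h.symm), zero_mul])
        exact hxy (ex ▸ ey)
      have hpnil : p = [] := by
        rcases p.eq_nil_or_concat' with rfl | ⟨p', z, rfl⟩
        · rfl
        exfalso
        have hz : z ∈ Λ := hp z (by simp)
        have comp : ∀ w : S, w * (wiv inv q * wpr (p' ++ [z])) * inv w
            = (w * wiv inv q * wpr p') * (z * inv w) := by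
          intro w
          rw [wpr_append, wpr_singleton]
          simp [mul_assoc]
        have ex : z = x := by
          by_contra hne
          exact h1 (by rw [comp x, hS.gen_zero z hz x hx hne, mul_zero])
        have ey : z = y := by
          by_contra hne
          exact h2 (by rw [comp y, hS.gen_zero z hz y hy hne, mul_zero])
        exact hxy (ex ▸ ey)
      subst hqnil; subst hpnil
      simp
    have : W = {1} := Set.Subset.antisymm hWsub (by rintro a rfl; exact h1W)
    exact this ▸ hWopen
  -- Step 2: each nonzero `a` is isolated.
  intro a ha0
  rcases poly_main inv hS a with ⟨ha, _⟩ | ⟨q, p, hq, hp, rfl⟩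
  · exact absurd ha ha0
  set f : S → S := fun z => wpr q * z * wiv inv p with hf
  have hcf : Continuous f := (hr (wiv inv p)).comp (hl (wpr q))
  set V : Set S := f ⁻¹' {1} with hV
  have hVopen : IsOpen V := hone.preimage hcf
  have haV : (wiv inv q * wpr p) ∈ V := by
    have h2 : wpr q * (wiv inv q * wpr p) * wiv inv p = 1 := by
      calc wpr q * (wiv inv q * wpr p) * wiv inv p
          = (wpr q * wiv inv q) * (wpr p * wiv inv p) := by simp [mul_assoc]
        _ = 1 := by rw [poly_wpr_wiv inv hS q hq, poly_wpr_wiv inv hS p hp, one_mul]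
    exact h2
  set C : Set S := (fun k => wiv inv (q.drop k) * wpr (p.drop k)) '' Set.Iic q.length
    with hC
  have hCfin : C.Finite := (Set.finite_Iic q.length).image _
  have hVC : V ⊆ C := by
    intro z hz
    simp only [hV, Set.mem_preimage, Set.mem_singleton_iff, hf] at hz
    have hz0 : z ≠ 0 := by
      rintro rfl
      rw [mul_zero, zero_mul] at hz
      exact hS.zero_ne_one hz
    rcases poly_main inv hS z with ⟨h0, _⟩ | ⟨t, s, ht, hs, rfl⟩
    · exact absurd h0 hz0
    have key : (wpr q * wiv inv t) * (wpr s * wiv inv p) = 1 := by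
      rw [← hz]; simp [mul_assoc]
    have mem0 : t = q → s = p →
        wiv inv t * wpr s ∈ C := by
      rintro rfl rfl
      exact ⟨0, by simp, by simp⟩
    rcases poly_CL inv hS t q hq ht with ⟨r₁, hr₁, hv₁⟩ | ⟨r₁, hr₁, hv₁⟩ | ⟨_, hv₁⟩
    · -- c1 = wpr r₁, q = r₁ ++ t
      have hr₁Λ : ∀ w ∈ r₁, w ∈ Λ := fun w hw =>
        hq w (hr₁ ▸ List.mem_append.2 (Or.inl hw))
      rcases poly_CL inv hS p s hs hp with ⟨r₂, hr₂, hv₂⟩ | ⟨r₂, hr₂, hv₂⟩ | ⟨_, hv₂⟩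
      · -- c2 = wpr r₂, s = r₂ ++ p
        rw [hv₁, hv₂, ← wpr_append] at key
        have hboth : r₁ ++ r₂ = [] := by
          refine poly_R1 inv hS _ ?_ key
          intro w hw
          rcases List.mem_append.1 hw with hw | hw
          · exact hr₁Λ w hw
          · exact hs w (hr₂ ▸ List.mem_append.2 (Or.inl hw))
        rcases List.append_eq_nil_iff.1 hboth with ⟨e1, e2⟩
        exact mem0 (by rw [hr₁, e1, List.nil_append]) (by rw [hr₂, e2, List.nil_append])
      · -- c2 = wiv r₂, p = r₂ ++ s
        rw [hv₁, hv₂] at key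
        have hr₂Λ : ∀ w ∈ r₂, w ∈ Λ := fun w hw =>
          hp w (hr₂ ▸ List.mem_append.2 (Or.inl hw))
        have hr12 : r₁ = r₂ := poly_R4 inv hS r₁ r₂ hr₁Λ hr₂Λ key
        refine ⟨r₁.length, ?_, ?_⟩
        · simp [hr₁, Set.mem_Iic]
        · show wiv inv (q.drop r₁.length) * wpr (p.drop r₁.length) = wiv inv t * wpr s
          rw [hr₁, hr₂, ← hr12, List.drop_left, List.drop_left]
      · rw [hv₁, hv₂, mul_zero] at key
        exact absurd key hS.zero_ne_one
    · -- c1 = wiv r₁, t = r₁ ++ q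
      have hr₁Λ : ∀ w ∈ r₁, w ∈ Λ := fun w hw =>
        ht w (hr₁ ▸ List.mem_append.2 (Or.inl hw))
      rcases poly_CL inv hS p s hs hp with ⟨r₂, hr₂, hv₂⟩ | ⟨r₂, hr₂, hv₂⟩ | ⟨_, hv₂⟩
      · -- c2 = wpr r₂
        rw [hv₁, hv₂] at key
        have hr₂Λ : ∀ w ∈ r₂, w ∈ Λ := fun w hw =>
          hs w (hr₂ ▸ List.mem_append.2 (Or.inl hw))
        obtain ⟨e1, e2⟩ := poly_R3 inv hS r₁ r₂ hr₁Λ hr₂Λ key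
        exact mem0 (by rw [hr₁, e1, List.nil_append]) (by rw [hr₂, e2, List.nil_append])
      · -- c2 = wiv r₂, p = r₂ ++ s
        rw [hv₁, hv₂, ← wiv_append] at key
        have hboth : r₂ ++ r₁ = [] := by
          refine poly_R2 inv hS _ ?_ key
          intro w hw
          rcases List.mem_append.1 hw with hw | hw
          · exact hp w (hr₂ ▸ List.mem_append.2 (Or.inl hw))
          · exact hr₁Λ w hw
        rcases List.append_eq_nil_iff.1 hboth with ⟨e2, e1⟩
        exact mem0 (by rw [hr₁, e1, List.nil_append]) (by rw [hr₂, e2, List.nil_append])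
      · rw [hv₁, hv₂, mul_zero] at key
        exact absurd key hS.zero_ne_one
    · rw [hv₁, zero_mul] at key
      exact absurd key hS.zero_ne_one
  -- Assemble: `{a} = V \ (C \ {a})`.
  have hsing : ({wiv inv q * wpr p} : Set S) = V \ (C \ {wiv inv q * wpr p}) := by
    ext z
    constructor
    · rintro rfl
      exact ⟨haV, fun h => h.2 rfl⟩
    · rintro ⟨hzV, hzn⟩
      have hzC : z ∈ C := hVC hzV
      by_contra hne
      exact hzn ⟨hzC, hne⟩
  rw [hsing]
  exact hVopen.sdiff ((hCfin.subset Set.diff_subset).isClosed)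
end

section
/- Let S be a non-discrete locally compact semitopological polycyclic monoid. For any compact neighborhoods U₀ and V₀ of the zero 0 in S, the set U₀∖V₀ is finite. -/
namespace PCMaux

variable {S : Type*} [MonoidWithZero S] {inv : S → S} {Λ : Set S}

/-- Product of a word (positive letters). -/
def Wp (l : List S) : S := l.prod

/-- Product of the inverses of a word, in reverse order. -/
def Wm (inv : S → S) (l : List S) : S := (l.reverse.map inv).prod

@[simp] theorem Wp_nil : Wp ([] : List S) = 1 := rfl

@[simp] theorem Wm_nil : Wm inv ([] : List S) = 1 := rfl

theorem Wp_concat (l : List S) (a : S) : Wp (l ++ [a]) = Wp l * a := by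
  simp [Wp]

theorem Wp_append (l₁ l₂ : List S) : Wp (l₁ ++ l₂) = Wp l₁ * Wp l₂ := by
  simp [Wp]

theorem Wm_concat (l : List S) (a : S) : Wm inv (l ++ [a]) = inv a * Wm inv l := by
  simp [Wm]

theorem Wm_append (l₁ l₂ : List S) : Wm inv (l₁ ++ l₂) = Wm inv l₂ * Wm inv l₁ := by
  simp [Wm]

theorem cancel (hS : IsPolycyclicMonoid S inv Λ) :
    ∀ l : List S, (∀ a ∈ l, a ∈ Λ) → Wp l * Wm inv l = 1 := by
  intro l
  induction l using List.reverseRecOn with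
  | nil => intro _; simp
  | append_singleton l a ih =>
    intro h
    have ha : a ∈ Λ := h a (by simp)
    rw [Wp_concat, Wm_concat, mul_assoc, ← mul_assoc a, hS.gen_unit a ha, one_mul,
      ih (fun b hb => h b (by simp [hb]))]

/-- Trichotomy for the middle product `Wp q * Wm r`. -/
theorem tri (hS : IsPolycyclicMonoid S inv Λ) :
    ∀ (r q : List S), (∀ a ∈ r, a ∈ Λ) → (∀ a ∈ q, a ∈ Λ) →
      (∃ t, q = t ++ r ∧ Wp q * Wm inv r = Wp t) ∨
      (∃ t, r = t ++ q ∧ Wp q * Wm inv r = Wm inv t) ∨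
      Wp q * Wm inv r = 0 := by
  intro r
  induction r using List.reverseRecOn with
  | nil => intro q _ _; exact Or.inl ⟨q, by simp, by simp⟩
  | append_singleton r b ihr =>
    intro q hr hq
    rcases List.eq_nil_or_concat q with rfl | ⟨q', a, rfl⟩
    · exact Or.inr (Or.inl ⟨r ++ [b], by simp, by simp⟩)
    · simp only [List.concat_eq_append] at hq ⊢
      have hb : b ∈ Λ := hr b (by simp)
      have ha : a ∈ Λ := hq a (by simp)
      have key : Wp (q' ++ [a]) * Wm inv (r ++ [b]) = Wp q' * ((a * inv b) * Wm inv r) := by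
        rw [Wp_concat, Wm_concat, mul_assoc, ← mul_assoc a]
      by_cases hab : a = b
      · subst hab
        rw [key, hS.gen_unit a ha, one_mul]
        rcases ihr q' (fun x hx => hr x (by simp [hx])) (fun x hx => hq x (by simp [hx])) with
          ⟨t, ht, hv⟩ | ⟨t, ht, hv⟩ | hv
        · exact Or.inl ⟨t, by rw [ht, List.append_assoc], hv⟩
        · exact Or.inr (Or.inl ⟨t, by rw [ht, List.append_assoc], hv⟩)
        · exact Or.inr (Or.inr hv)
      · rw [key, hS.gen_zero a ha b hb hab, zero_mul, mul_zero]
        exact Or.inr (Or.inr rfl)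

/-- Normal forms are nonzero. -/
theorem nf_ne_zero (hS : IsPolycyclicMonoid S inv Λ) (p q : List S)
    (hp : ∀ a ∈ p, a ∈ Λ) (hq : ∀ a ∈ q, a ∈ Λ) : Wm inv p * Wp q ≠ 0 := by
  intro h
  have key : (Wp p * Wm inv p) * (Wp q * Wm inv q) = Wp p * (Wm inv p * Wp q) * Wm inv q := by
    simp [mul_assoc]
  rw [cancel hS p hp, cancel hS q hq, one_mul, h, mul_zero, zero_mul] at key
  exact hS.zero_ne_one key.symm

/-- No generator is invertible. -/
theorem no_unit (hS : IsPolycyclicMonoid S inv Λ) : ∀ x ∈ Λ, inv x * x ≠ 1 := by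
  intro x hx h
  by_cases hy : ∃ y ∈ Λ, y ≠ x
  · obtain ⟨y, hyΛ, hyx⟩ := hy
    have h0 : y * inv x = 0 := hS.gen_zero y hyΛ x hx hyx
    have hy0 : y = 0 := by
      calc y = y * (inv x * x) := by rw [h, mul_one]
        _ = (y * inv x) * x := by rw [mul_assoc]
        _ = 0 := by rw [h0, zero_mul]
    have h1 : y * inv y = 1 := hS.gen_unit y hyΛ
    rw [hy0, zero_mul] at h1
    exact hS.zero_ne_one h1
  · push_neg at hy
    set M : Subsemigroup S :=
      { carrier := {u | ∃ v, u * v = 1 ∧ v * u = 1}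
        mul_mem' := by
          rintro a b ⟨va, ha1, ha2⟩ ⟨vb, hb1, hb2⟩
          exact ⟨vb * va, by rw [mul_assoc, ← mul_assoc b, hb1, one_mul, ha1],
            by rw [mul_assoc, ← mul_assoc va, ha2, one_mul, hb2]⟩ } with hM
    have hsub : Λ ∪ inv '' Λ ⊆ ↑M := by
      rintro z (hz | ⟨w, hw, rfl⟩)
      · have hzx : z = x := hy z hz
        exact ⟨inv z, hS.gen_unit z hz, by rw [hzx]; exact h⟩
      · have hwx : w = x := hy w hw
        exact ⟨w, by rw [hwx]; exact h, hS.gen_unit w hw⟩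
    have h0M : (0 : S) ∈ M := by
      have h0 : (0 : S) ∈ (⊤ : Subsemigroup S) := trivial
      rw [← hS.generates] at h0
      exact Subsemigroup.closure_le.mpr hsub h0
    obtain ⟨v, hv, _⟩ := h0M
    rw [zero_mul] at hv
    exact hS.zero_ne_one hv

theorem Wp_eq_one (hS : IsPolycyclicMonoid S inv Λ) :
    ∀ l : List S, (∀ a ∈ l, a ∈ Λ) → Wp l = 1 → l = [] := by
  intro l hl h1
  rcases List.eq_nil_or_concat l with rfl | ⟨l', a, rfl⟩
  · rfl
  · simp only [List.concat_eq_append] at hl h1 ⊢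
    exfalso
    have ha : a ∈ Λ := hl a (by simp)
    have hl' : ∀ b ∈ l', b ∈ Λ := fun b hb => hl b (by simp [hb])
    have hWm : Wm inv (l' ++ [a]) = 1 := by
      have hc := cancel hS _ hl
      rwa [h1, one_mul] at hc
    rw [Wm_concat] at hWm
    rw [Wp_concat] at h1
    have e1 : Wm inv l' = a := by
      calc Wm inv l' = (a * inv a) * Wm inv l' := by rw [hS.gen_unit a ha, one_mul]
        _ = a * (inv a * Wm inv l') := by rw [mul_assoc]
        _ = a := by rw [hWm, mul_one]
    have e2 : Wp l' = inv a := by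
      calc Wp l' = (Wp l' * a) * inv a := by rw [mul_assoc, hS.gen_unit a ha, mul_one]
        _ = inv a := by rw [h1, one_mul]
    have : inv a * a = 1 := by rw [← e2, ← e1]; exact cancel hS l' hl'
    exact no_unit hS a ha this

theorem Wm_eq_one (hS : IsPolycyclicMonoid S inv Λ) (l : List S)
    (hl : ∀ a ∈ l, a ∈ Λ) (h1 : Wm inv l = 1) : l = [] := by
  apply Wp_eq_one hS l hl
  have hc := cancel hS l hl
  rwa [h1, mul_one] at hc

theorem idem_eq_one (hS : IsPolycyclicMonoid S inv Λ) :
    ∀ l : List S, (∀ a ∈ l, a ∈ Λ) → Wm inv l * Wp l = 1 → l = [] := by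
  intro l
  induction l using List.reverseRecOn with
  | nil => intros; rfl
  | append_singleton l a ih =>
    intro hl h1
    exfalso
    have ha : a ∈ Λ := hl a (by simp)
    have hl' : ∀ b ∈ l, b ∈ Λ := fun b hb => hl b (by simp [hb])
    rw [Wm_concat, Wp_concat] at h1
    have key : Wm inv l * Wp l = 1 := by
      calc Wm inv l * Wp l
          = (a * inv a) * (Wm inv l * Wp l) * (a * inv a) := by
            rw [hS.gen_unit a ha, one_mul, mul_one]
        _ = a * ((inv a * Wm inv l * (Wp l * a)) * inv a) := by simp [mul_assoc]
        _ = a * inv a := by rw [h1, one_mul]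
        _ = 1 := hS.gen_unit a ha
    have hnil : l = [] := ih hl' key
    subst hnil
    simp only [Wm_nil, Wp_nil, mul_one, one_mul] at h1
    exact no_unit hS a ha h1

theorem mixed_eq_one (hS : IsPolycyclicMonoid S inv Λ) (p q : List S)
    (hp : ∀ a ∈ p, a ∈ Λ) (hq : ∀ a ∈ q, a ∈ Λ)
    (h1 : Wm inv p * Wp q = 1) : p = [] ∧ q = [] := by
  have hq2 : Wm inv p = Wm inv q := by
    calc Wm inv p = Wm inv p * (Wp q * Wm inv q) := by rw [cancel hS q hq, mul_one]
      _ = (Wm inv p * Wp q) * Wm inv q := by rw [mul_assoc]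
      _ = Wm inv q := by rw [h1, one_mul]
  have hq1 : Wp q = Wp p := by
    calc Wp q = (Wp p * Wm inv p) * Wp q := by rw [cancel hS p hp, one_mul]
      _ = Wp p * (Wm inv p * Wp q) := by rw [mul_assoc]
      _ = Wp p := by rw [h1, mul_one]
  have hqnil : q = [] := idem_eq_one hS q hq (by rw [← hq2]; exact h1)
  subst hqnil
  refine ⟨Wp_eq_one hS p hp ?_, rfl⟩
  rw [← hq1]; simp

/-- Normal form existence. -/
theorem nf (hS : IsPolycyclicMonoid S inv Λ) (s : S) :
    s = 0 ∨ ∃ p q, (∀ a ∈ p, a ∈ Λ) ∧ (∀ a ∈ q, a ∈ Λ) ∧ s = Wm inv p * Wp q := by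
  have hs : s ∈ Subsemigroup.closure (Λ ∪ inv '' Λ) := by rw [hS.generates]; trivial
  induction hs using Subsemigroup.closure_induction with
  | mem x hx =>
    rcases hx with hx | ⟨w, hw, rfl⟩
    · exact Or.inr ⟨[], [x], by simp, by simp [hx], by simp [Wp]⟩
    · exact Or.inr ⟨[w], [], by simp [hw], by simp, by simp [Wm]⟩
  | mul x y hx hy ihx ihy =>
    rcases ihx with rfl | ⟨p, q, hp, hq, rfl⟩
    · exact Or.inl (zero_mul y)
    rcases ihy with rfl | ⟨r, z, hrm, hzm, rfl⟩
    · exact Or.inl (mul_zero _)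
    rcases tri hS r q hrm hq with ⟨t, ht, hv⟩ | ⟨t, ht, hv⟩ | hv
    · refine Or.inr ⟨p, t ++ z, hp, ?_, ?_⟩
      · intro b hb
        rcases List.mem_append.mp hb with hb | hb
        · exact hq b (by rw [ht]; exact List.mem_append_left _ hb)
        · exact hzm b hb
      · calc Wm inv p * Wp q * (Wm inv r * Wp z)
            = Wm inv p * ((Wp q * Wm inv r) * Wp z) := by simp [mul_assoc]
          _ = Wm inv p * (Wp t * Wp z) := by rw [hv]
          _ = Wm inv p * Wp (t ++ z) := by rw [Wp_append]
    · refine Or.inr ⟨t ++ p, z, ?_, hzm, ?_⟩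
      · intro b hb
        rcases List.mem_append.mp hb with hb | hb
        · exact hrm b (by rw [ht]; exact List.mem_append_left _ hb)
        · exact hp b hb
      · calc Wm inv p * Wp q * (Wm inv r * Wp z)
            = Wm inv p * ((Wp q * Wm inv r) * Wp z) := by simp [mul_assoc]
          _ = Wm inv p * (Wm inv t * Wp z) := by rw [hv]
          _ = Wm inv (t ++ p) * Wp z := by rw [Wm_append, mul_assoc]
    · refine Or.inl ?_
      calc Wm inv p * Wp q * (Wm inv r * Wp z)
          = Wm inv p * ((Wp q * Wm inv r) * Wp z) := by simp [mul_assoc]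
        _ = 0 := by rw [hv, zero_mul, mul_zero]

section Topology

variable [TopologicalSpace S] [T2Space S]

/-- The identity is an isolated point. -/
theorem isolated_one (hS : IsPolycyclicMonoid S inv Λ)
    (hl : ∀ a : S, Continuous (fun x : S => a * x))
    (hr : ∀ a : S, Continuous (fun x : S => x * a)) : IsOpen {(1 : S)} := by
  have hcont : ∀ b c : S, Continuous fun s : S => b * s * c := fun b c =>
    (hr c).comp (hl b)
  have h10 : (1 : S) ≠ 0 := fun h => hS.zero_ne_one h.symm
  -- a helper: if the last letter of `p` is `c ≠ x`, then `x * (Wm p * Wp q) * inv x = 0`,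
  -- and similarly on the right.
  have left_zero : ∀ (x c : S), x ∈ Λ → c ∈ Λ → x ≠ c → ∀ (l q : List S),
      x * (Wm inv (l ++ [c]) * Wp q) * inv x = 0 := by
    intro x c hx hc hne l q
    rw [Wm_concat]
    have : x * ((inv c * Wm inv l) * Wp q) * inv x
        = (x * inv c) * ((Wm inv l * Wp q) * inv x) := by simp [mul_assoc]
    rw [this, hS.gen_zero x hx c hc hne, zero_mul]
  have right_zero : ∀ (x d : S), x ∈ Λ → d ∈ Λ → d ≠ x → ∀ (p l : List S),
      x * (Wm inv p * Wp (l ++ [d])) * inv x = 0 := by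
    intro x d hx hd hne p l
    rw [Wp_concat]
    have : x * (Wm inv p * (Wp l * d)) * inv x
        = (x * (Wm inv p * Wp l)) * (d * inv x) := by simp [mul_assoc]
    rw [this, hS.gen_zero d hd x hx hne, mul_zero]
  by_cases hΛ : ∃ x ∈ Λ, ∃ y ∈ Λ, x ≠ y
  · obtain ⟨x, hx, y, hy, hxy⟩ := hΛ
    have heq : {(1 : S)} =
        ((fun s : S => x * s * inv x) ⁻¹' {0}ᶜ) ∩ ((fun s : S => y * s * inv y) ⁻¹' {0}ᶜ) := by
      apply Set.eq_of_subset_of_subset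
      · intro s hs
        rw [Set.mem_singleton_iff] at hs; subst hs
        constructor <;> simp only [Set.mem_preimage, Set.mem_compl_iff, Set.mem_singleton_iff,
          mul_one]
        · rw [hS.gen_unit x hx]; exact h10
        · rw [hS.gen_unit y hy]; exact h10
      · rintro s ⟨hsx, hsy⟩
        simp only [Set.mem_preimage, Set.mem_compl_iff, Set.mem_singleton_iff] at hsx hsy
        rcases nf hS s with rfl | ⟨p, q, hp, hq, rfl⟩
        · exact absurd (by rw [mul_zero, zero_mul]) hsx
        rcases List.eq_nil_or_concat p with rfl | ⟨l, c, rfl⟩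
        · rcases List.eq_nil_or_concat q with rfl | ⟨l, d, rfl⟩
          · simp
          · simp only [List.concat_eq_append] at hq hsx hsy
            have hd : d ∈ Λ := hq d (by simp)
            by_cases hdx : d = x
            · by_cases hdy : d = y
              · exact absurd (hdx ▸ hdy) hxy
              · exact absurd (right_zero y d hy hd hdy [] l) hsy
            · exact absurd (right_zero x d hx hd hdx [] l) hsx
        · simp only [List.concat_eq_append] at hp hsx hsy
          have hc : c ∈ Λ := hp c (by simp)
          by_cases hcx : x = c
          · by_cases hcy : y = c
            · exact absurd (hcx.trans hcy.symm) hxy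
            · exact absurd (left_zero y c hy hc hcy l q) hsy
          · exact absurd (left_zero x c hx hc hcx l q) hsx
    rw [heq]
    exact ((hcont x (inv x)).isOpen_preimage _ isClosed_singleton.isOpen_compl).inter
      ((hcont y (inv y)).isOpen_preimage _ isClosed_singleton.isOpen_compl)
  · -- Λ has exactly one element
    push_neg at hΛ
    have hx : ∃ x, x ∈ Λ := by
      by_contra hempty
      push_neg at hempty
      have hE : Λ ∪ inv '' Λ = (∅ : Set S) := by
        apply Set.eq_empty_iff_forall_notMem.mpr
        rintro z (hz | ⟨w, hw, rfl⟩)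
        · exact hempty z hz
        · exact hempty w hw
      have h0 : (0 : S) ∈ (⊤ : Subsemigroup S) := trivial
      rw [← hS.generates, hE, Subsemigroup.closure_empty] at h0
      exact Subsemigroup.notMem_bot h0
    obtain ⟨x, hx⟩ := hx
    have hall : ∀ y ∈ Λ, y = x := fun y hy => hΛ y hy x hx
    have he1 : (1 : S) ≠ inv x * x := fun h => no_unit hS x hx h.symm
    obtain ⟨A, B, hA, hB, h1A, heB, hAB⟩ := t2_separation he1
    obtain ⟨A₀, B₀, hA₀, hB₀, h1A₀, h0B₀, hAB₀⟩ := t2_separation h10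
    have hU₁ : IsOpen ((fun s : S => (inv x * x) * s) ⁻¹' B) :=
      (hl (inv x * x)).isOpen_preimage _ hB
    have hU₂ : IsOpen ((fun s : S => s * (inv x * x)) ⁻¹' B) :=
      (hr (inv x * x)).isOpen_preimage _ hB
    have heq : {(1 : S)} =
        A ∩ A₀ ∩ ((fun s : S => (inv x * x) * s) ⁻¹' B) ∩
          ((fun s : S => s * (inv x * x)) ⁻¹' B) := by
      apply Set.eq_of_subset_of_subset
      · intro s hs
        rw [Set.mem_singleton_iff] at hs; subst hs
        refine ⟨⟨⟨h1A, h1A₀⟩, ?_⟩, ?_⟩ <;>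
          simp only [Set.mem_preimage, mul_one, one_mul] <;> exact heB
      · rintro s ⟨⟨⟨hsA, hsA₀⟩, hs₁⟩, hs₂⟩
        simp only [Set.mem_preimage] at hs₁ hs₂
        rcases nf hS s with rfl | ⟨p, q, hp, hq, rfl⟩
        · exact absurd hsA₀ (Set.disjoint_right.mp hAB₀ h0B₀)
        rcases List.eq_nil_or_concat p with rfl | ⟨l, c, rfl⟩
        · rcases List.eq_nil_or_concat q with rfl | ⟨l, d, rfl⟩
          · simp
          · exfalso
            simp only [List.concat_eq_append] at hq hsA hs₂
            have hdΛ : d ∈ Λ := hq d (by simp)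
            have hdx : d = x := hall d hdΛ
            subst hdx
            have hfix : (Wm inv [] * Wp (l ++ [d])) * (inv d * d)
                = Wm inv [] * Wp (l ++ [d]) := by
              rw [Wm_nil, one_mul, Wp_concat, mul_assoc, ← mul_assoc d,
                hS.gen_unit d hdΛ, one_mul]
            rw [hfix] at hs₂
            exact Set.disjoint_left.mp hAB hsA hs₂
        · exfalso
          simp only [List.concat_eq_append] at hp hsA hs₁
          have hcΛ : c ∈ Λ := hp c (by simp)
          have hcx : c = x := hall c hcΛ
          subst hcx
          have hfix : (inv c * c) * (Wm inv (l ++ [c]) * Wp q)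
              = Wm inv (l ++ [c]) * Wp q := by
            rw [Wm_concat]
            calc (inv c * c) * ((inv c * Wm inv l) * Wp q)
                = inv c * ((c * inv c) * (Wm inv l * Wp q)) := by simp [mul_assoc]
              _ = (inv c * Wm inv l) * Wp q := by
                  rw [hS.gen_unit c hcΛ, one_mul, mul_assoc]
          rw [hfix] at hs₁
          exact Set.disjoint_left.mp hAB hsA hs₁
    rw [heq]
    exact ((hA.inter hA₀).inter hU₁).inter hU₂

/-- Every nonzero element is isolated. -/
theorem isolated_nonzero (hS : IsPolycyclicMonoid S inv Λ)
    (hl : ∀ a : S, Continuous (fun x : S => a * x))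
    (hr : ∀ a : S, Continuous (fun x : S => x * a))
    (a : S) (ha : a ≠ 0) : IsOpen {a} := by
  rcases nf hS a with rfl | ⟨u, v, hu, hv, rfl⟩
  · exact absurd rfl ha
  have h1 : IsOpen {(1 : S)} := isolated_one hS hl hr
  set g : S → S := fun s => Wp u * s * Wm inv v with hg
  have hgc : Continuous g := (hr _).comp (hl _)
  have hGopen : IsOpen (g ⁻¹' {1}) := hgc.isOpen_preimage _ h1
  have hga : g (Wm inv u * Wp v) = 1 := by
    show Wp u * (Wm inv u * Wp v) * Wm inv v = 1
    calc Wp u * (Wm inv u * Wp v) * Wm inv v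
        = (Wp u * Wm inv u) * (Wp v * Wm inv v) := by simp [mul_assoc]
      _ = 1 := by rw [cancel hS u hu, cancel hS v hv, one_mul]
  set F : Set S := (fun n => Wm inv (u.drop n) * Wp (v.drop n)) '' Set.Iic u.length with hF
  have hFfin : F.Finite := (Set.finite_Iic _).image _
  have hsub : g ⁻¹' {1} ⊆ F := by
    intro s hs
    simp only [Set.mem_preimage, Set.mem_singleton_iff] at hs
    rcases nf hS s with rfl | ⟨p, q, hp, hq, rfl⟩
    · exfalso
      rw [hg] at hs
      simp only [mul_zero, zero_mul] at hs
      exact hS.zero_ne_one hs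
    have key : (Wp u * Wm inv p) * (Wp q * Wm inv v) = 1 := by
      rw [← hs, hg]; simp [mul_assoc]
    have hmemF : ∀ t : List S, u = t ++ p → v = t ++ q →
        Wm inv p * Wp q ∈ F := by
      intro t htu htv
      refine ⟨t.length, ?_, ?_⟩
      · rw [Set.mem_Iic, htu]; simp
      · rw [htu, htv]; simp [List.drop_left]
    rcases tri hS p u hp hu with ⟨t₁, ht₁, hv₁⟩ | ⟨t₁, ht₁, hv₁⟩ | hv₁
    · rcases tri hS v q hv hq with ⟨t₂, ht₂, hv₂⟩ | ⟨t₂, ht₂, hv₂⟩ | hv₂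
      · -- key : Wp t₁ * Wp t₂ = 1
        rw [hv₁, hv₂, ← Wp_append] at key
        have ht₁mem : ∀ b ∈ t₁ ++ t₂, b ∈ Λ := by
          intro b hb
          rcases List.mem_append.mp hb with hb | hb
          · exact hu b (by rw [ht₁]; exact List.mem_append_left _ hb)
          · exact hq b (by rw [ht₂]; exact List.mem_append_left _ hb)
        have hnil := Wp_eq_one hS _ ht₁mem key
        rcases List.append_eq_nil_iff.mp hnil with ⟨h1n, h2n⟩
        subst h1n; subst h2n
        exact hmemF [] (by simpa using ht₁) (by simpa using ht₂.symm)
      · -- key : Wp t₁ * Wm inv t₂ = 1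
        rw [hv₁, hv₂] at key
        have ht₁mem : ∀ b ∈ t₁, b ∈ Λ := fun b hb =>
          hu b (by rw [ht₁]; exact List.mem_append_left _ hb)
        have ht₂mem : ∀ b ∈ t₂, b ∈ Λ := fun b hb =>
          hv b (by rw [ht₂]; exact List.mem_append_left _ hb)
        have ht12 : t₁ = t₂ := by
          rcases tri hS t₂ t₁ ht₂mem ht₁mem with ⟨t, ht, hvt⟩ | ⟨t, ht, hvt⟩ | hvt
          · rw [hvt] at key
            have : t = [] := Wp_eq_one hS t
              (fun b hb => ht₁mem b (by rw [ht]; exact List.mem_append_left _ hb)) key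
            rw [this] at ht; simpa using ht
          · rw [hvt] at key
            have : t = [] := Wm_eq_one hS t
              (fun b hb => ht₂mem b (by rw [ht]; exact List.mem_append_left _ hb)) key
            rw [this] at ht; simp at ht; exact ht.symm
          · rw [hvt] at key; exact absurd key hS.zero_ne_one
        exact hmemF t₁ ht₁ (by rw [ht12]; exact ht₂)
      · rw [hv₂, mul_zero] at key; exact absurd key hS.zero_ne_one
    · rcases tri hS v q hv hq with ⟨t₂, ht₂, hv₂⟩ | ⟨t₂, ht₂, hv₂⟩ | hv₂
      · -- key : Wm inv t₁ * Wp t₂ = 1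
        rw [hv₁, hv₂] at key
        have ht₁mem : ∀ b ∈ t₁, b ∈ Λ := fun b hb =>
          hp b (by rw [ht₁]; exact List.mem_append_left _ hb)
        have ht₂mem : ∀ b ∈ t₂, b ∈ Λ := fun b hb =>
          hq b (by rw [ht₂]; exact List.mem_append_left _ hb)
        obtain ⟨h1n, h2n⟩ := mixed_eq_one hS t₁ t₂ ht₁mem ht₂mem key
        subst h1n; subst h2n
        exact hmemF [] (by simpa using ht₁.symm) (by simpa using ht₂.symm)
      · -- key : Wm inv t₁ * Wm inv t₂ = 1
        rw [hv₁, hv₂, ← Wm_append] at key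
        have htmem : ∀ b ∈ t₂ ++ t₁, b ∈ Λ := by
          intro b hb
          rcases List.mem_append.mp hb with hb | hb
          · exact hv b (by rw [ht₂]; exact List.mem_append_left _ hb)
          · exact hp b (by rw [ht₁]; exact List.mem_append_left _ hb)
        have hnil := Wm_eq_one hS _ htmem key
        rcases List.append_eq_nil_iff.mp hnil with ⟨h2n, h1n⟩
        subst h1n; subst h2n
        exact hmemF [] (by simpa using ht₁.symm) (by simpa using ht₂)
      · rw [hv₂, mul_zero] at key; exact absurd key hS.zero_ne_one
    · rw [hv₁, zero_mul] at key; exact absurd key hS.zero_ne_one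
  have heq : {Wm inv u * Wp v} = g ⁻¹' {1} ∩ (F \ {Wm inv u * Wp v})ᶜ := by
    apply Set.eq_of_subset_of_subset
    · intro s hs
      rw [Set.mem_singleton_iff] at hs; subst hs
      exact ⟨hga, fun h => h.2 rfl⟩
    · rintro s ⟨hsG, hsn⟩
      have hsF := hsub hsG
      by_contra hne
      exact hsn ⟨hsF, hne⟩
  rw [heq]
  exact hGopen.inter ((hFfin.diff).isClosed.isOpen_compl)

end Topology

end PCMaux

/-- In a non-discrete locally compact semitopological polycyclic monoid,
the difference of two compact neighborhoods of zero is finite. -/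
theorem stmt5 {S : Type*} [MonoidWithZero S] (inv : S → S) (Λ : Set S)
    (hS : IsPolycyclicMonoid S inv Λ)
    [TopologicalSpace S] [T2Space S] [LocallyCompactSpace S]
    (hl : ∀ a : S, Continuous (fun x : S => a * x))
    (hr : ∀ a : S, Continuous (fun x : S => x * a))
    (hnd : ¬ DiscreteTopology S)
    (U₀ V₀ : Set S)
    (hU : U₀ ∈ nhds (0 : S)) (hUc : IsCompact U₀)
    (hV : V₀ ∈ nhds (0 : S)) (hVc : IsCompact V₀) :
    (U₀ \ V₀).Finite := by
  obtain ⟨O, hOV, hOopen, hO0⟩ := mem_nhds_iff.mp hV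
  have hKc : IsCompact (U₀ \ O) := hUc.diff hOopen
  have hKne : ∀ a ∈ U₀ \ O, a ≠ 0 := fun a haK h => haK.2 (h ▸ hO0)
  obtain ⟨t, ht⟩ := hKc.elim_finite_subcover (fun a : ↥(U₀ \ O) => ({a.1} : Set S))
    (fun a => PCMaux.isolated_nonzero hS hl hr a.1 (hKne a.1 a.2))
    (fun a haK => Set.mem_iUnion.mpr ⟨⟨a, haK⟩, rfl⟩)
  have hKfin : (U₀ \ O).Finite :=
    (Set.Finite.biUnion t.finite_toSet (fun i _ => Set.finite_singleton i.1)).subset ht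
  exact hKfin.subset (fun s hs => ⟨hs.1, fun h => hs.2 (hOV h)⟩)
end
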